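/- arXiv:1304.1641 — 9 statements merged into one kernel-verified Lean document; each statement's English description precedes it below -/
import Mathlib

section
/- Let q be a formal parameter and let E(x) = ∑_{n≥0} (-x)^n / ((1-q)(1-q^2)···(1-q^n)) be the quantum exponential formal power series. If X and Y are elements of an associative algebra over the field of rational functions in q satisfying Y·X = q·X·Y, then E(X)·E(Y) = E(X+Y), where E(X) denotes the formal substitution of X into the series (valid e.g. when X, Y are nilpotent or in a suitable completion). -/
/-- Coefficients of the quantum exponential series
`E(x) = ∑ (-x)^n / ((1-q)⋯(1-q^n))` with `q = RatFunc.X`. -/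
noncomputable def qcoef (n : ℕ) : RatFunc ℚ :=
  (-1 : RatFunc ℚ) ^ n / ∏ k ∈ Finset.range n, (1 - (RatFunc.X : RatFunc ℚ) ^ (k + 1))

/-- The quantum exponential of an element of a topological algebra over `ℚ(q)`. -/
noncomputable def qexp {A : Type*} [Ring A] [Algebra (RatFunc ℚ) A] [TopologicalSpace A]
    (x : A) : A :=
  ∑' n : ℕ, qcoef n • x ^ n

/-!
If `Y * X = q • (X * Y)`, expanding `(X + Y) ^ n` and moving every `Y` to the right gives the
`q`-binomial theorem `(X + Y) ^ n = ∑ [n choose k]_q • X ^ k * Y ^ (n - k)`, where the Gaussian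
binomial satisfies `[n choose k]_q * (q;q)_k * (q;q)_(n-k) = (q;q)_n`. Since the `n`-th
coefficient of `E` is `(-1) ^ n / (q;q)_n`, this says that the terms of degree `n` of `E(X + Y)`
are those of the Cauchy product of `E(X)` and `E(Y)`. For nilpotent `X` and `Y` all the series
are finite sums, so the Cauchy product formula needs no continuity of multiplication.
-/

open Finset Filter

section GaussBinom

variable {R : Type*} [CommSemiring R] (q : R)

def gaussBinom : ℕ → ℕ → R
  | _, 0 => 1
  | 0, _ + 1 => 0
  | n + 1, k + 1 => gaussBinom n k + q ^ (k + 1) * gaussBinom n (k + 1)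

@[simp]
theorem gaussBinom_zero_right (n : ℕ) : gaussBinom q n 0 = 1 := by
  cases n <;> rfl

theorem gaussBinom_succ_succ (n k : ℕ) :
    gaussBinom q (n + 1) (k + 1) = gaussBinom q n k + q ^ (k + 1) * gaussBinom q n (k + 1) :=
  rfl

theorem gaussBinom_eq_zero_of_lt {n k : ℕ} (h : n < k) : gaussBinom q n k = 0 := by
  induction n generalizing k with
  | zero => obtain ⟨k, rfl⟩ := Nat.exists_eq_add_one.2 h; rfl
  | succ n ih =>
    obtain ⟨k, rfl⟩ := Nat.exists_eq_add_one.2 (Nat.zero_lt_of_lt h)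
    rw [gaussBinom_succ_succ, ih (by omega), ih (by omega), mul_zero, add_zero]

@[simp]
theorem gaussBinom_self (n : ℕ) : gaussBinom q n n = 1 := by
  induction n with
  | zero => rfl
  | succ n ih => rw [gaussBinom_succ_succ, ih, gaussBinom_eq_zero_of_lt q n.lt_succ_self,
      mul_zero, add_zero]

end GaussBinom

section QPochhammer

variable {R : Type*} [CommRing R] (q : R)

def qPochhammer (n : ℕ) : R :=
  ∏ k ∈ range n, (1 - q ^ (k + 1))

theorem qPochhammer_succ (n : ℕ) : qPochhammer q (n + 1) = qPochhammer q n * (1 - q ^ (n + 1)) :=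
  prod_range_succ _ n

theorem gaussBinom_mul_qPochhammer (k m : ℕ) :
    gaussBinom q (k + m) k * qPochhammer q k * qPochhammer q m = qPochhammer q (k + m) := by
  induction k generalizing m with
  | zero => simp [qPochhammer]
  | succ k ihk =>
    induction m with
    | zero => simp [qPochhammer]
    | succ m ihm =>
      have hk := ihk (m + 1)
      rw [show k + 1 + (m + 1) = k + (m + 1) + 1 by ring, gaussBinom_succ_succ,
        qPochhammer_succ q (k + (m + 1)), qPochhammer_succ q k, qPochhammer_succ q m]
      rw [qPochhammer_succ q k, show k + 1 + m = k + (m + 1) by ring] at ihm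
      rw [qPochhammer_succ q m] at hk
      linear_combination (1 - q ^ (k + 1)) * hk + q ^ (k + 1) * (1 - q ^ (m + 1)) * ihm

end QPochhammer

section QCommute

variable {R A : Type*} [CommSemiring R] [Semiring A] [Algebra R A] {q : R} {x y : A}

theorem mul_pow_eq_smul_pow_mul (h : y * x = q • (x * y)) (k : ℕ) :
    y * x ^ k = q ^ k • (x ^ k * y) := by
  induction k with
  | zero => simp
  | succ k ih =>
    rw [pow_succ, ← mul_assoc, ih, smul_mul_assoc, mul_assoc, h, mul_smul_comm, smul_smul,
      ← mul_assoc, ← pow_succ, pow_succ]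

theorem add_pow_eq_sum_gaussBinom (h : y * x = q • (x * y)) (n : ℕ) :
    (x + y) ^ n = ∑ p ∈ antidiagonal n, gaussBinom q n p.1 • (x ^ p.1 * y ^ p.2) := by
  induction n with
  | zero => simp
  | succ n ih =>
    have hx : x * (x + y) ^ n =
        ∑ p ∈ antidiagonal n, gaussBinom q n p.1 • (x ^ (p.1 + 1) * y ^ p.2) := by
      simp only [ih, mul_sum, mul_smul_comm, ← mul_assoc, ← pow_succ']
    have hy : y * (x + y) ^ n = ∑ p ∈ antidiagonal (n + 1),
        (q ^ p.1 * gaussBinom q n p.1) • (x ^ p.1 * y ^ p.2) := by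
      have hterm (c : R) (i j : ℕ) :
          y * (c • (x ^ i * y ^ j)) = (q ^ i * c) • (x ^ i * y ^ (j + 1)) := by
        rw [mul_smul_comm, ← mul_assoc, mul_pow_eq_smul_pow_mul h, smul_mul_assoc, smul_smul,
          mul_assoc, ← pow_succ', mul_comm]
      rw [Nat.sum_antidiagonal_succ', gaussBinom_eq_zero_of_lt q n.lt_succ_self, mul_zero,
        zero_smul, zero_add, ih, mul_sum]
      simp only [hterm]
    rw [pow_succ', add_mul, hx, hy]
    simp only [Nat.sum_antidiagonal_succ, gaussBinom_zero_right, gaussBinom_succ_succ, add_smul,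
      sum_add_distrib, pow_zero, one_mul, mul_one, one_smul]
    abel

end QCommute

theorem tsum_mul_tsum_eq_tsum_sum_antidiagonal_of_eventually_zero {R : Type*}
    [NonUnitalNonAssocSemiring R] [TopologicalSpace R] {f g : ℕ → R}
    (hf : ∀ᶠ n in atTop, f n = 0) (hg : ∀ᶠ n in atTop, g n = 0) :
    (∑' n, f n) * ∑' n, g n = ∑' n, ∑ kl ∈ antidiagonal n, f kl.1 * g kl.2 := by
  obtain ⟨N, hN⟩ := eventually_atTop.1 (hf.and hg)
  have hfg : ∀ i j, N + N ≤ i + j → f i * g j = 0 := by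
    intro i j hij
    rcases le_or_gt N i with hi | hi
    · rw [(hN i hi).1, zero_mul]
    · rw [(hN j (by omega)).2, mul_zero]
  have hsupp {u : ℕ → R} (hu : ∀ n ≥ N, u n = 0) : ∑' n, u n = ∑ n ∈ range (N + N), u n :=
    tsum_eq_sum fun n hn => hu n (by rw [mem_range] at hn; omega)
  rw [hsupp fun n hn => (hN n hn).1, hsupp fun n hn => (hN n hn).2, sum_mul_sum,
    tsum_eq_sum (s := range (N + N)) fun n hn => sum_eq_zero fun kl hkl => hfg _ _ <| by
      rw [mem_range] at hn; rw [HasAntidiagonal.mem_antidiagonal] at hkl; omega]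
  simp_rw [Nat.sum_antidiagonal_eq_sum_range_succ fun i j => f i * g j]
  refine .trans (sum_congr rfl fun i _ => ?_) (sum_range_diag_flip _ fun i j => f i * g j).symm
  refine (sum_subset (range_subset_range.2 (Nat.sub_le _ _)) fun j _ hj => hfg i j ?_).symm
  rw [mem_range] at hj; omega

theorem RatFunc.qPochhammer_X_ne_zero {K : Type*} [Field K] (n : ℕ) :
    qPochhammer (RatFunc.X : RatFunc K) n ≠ 0 := by
  refine prod_ne_zero_iff.2 fun m _ => ?_
  rw [← RatFunc.algebraMap_X, ← map_pow, ← map_one (algebraMap (Polynomial K) _), ← map_sub]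
  refine RatFunc.algebraMap_ne_zero fun h => ?_
  simpa using congrArg (Polynomial.eval 0) h

theorem qcoef_eq_div_qPochhammer (n : ℕ) :
    qcoef n = (-1) ^ n / qPochhammer (RatFunc.X : RatFunc ℚ) n :=
  rfl

theorem qcoef_mul_gaussBinom (k m : ℕ) :
    qcoef (k + m) * gaussBinom RatFunc.X (k + m) k = qcoef k * qcoef m := by
  have h := gaussBinom_mul_qPochhammer (RatFunc.X : RatFunc ℚ) k m
  have hk := RatFunc.qPochhammer_X_ne_zero (K := ℚ) k
  have hm := RatFunc.qPochhammer_X_ne_zero (K := ℚ) m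
  have hkm := RatFunc.qPochhammer_X_ne_zero (K := ℚ) (k + m)
  rw [qcoef_eq_div_qPochhammer, qcoef_eq_div_qPochhammer, qcoef_eq_div_qPochhammer]
  field_simp
  rw [← h, pow_add]
  ring

theorem IsNilpotent.eventually_smul_pow_eq_zero {R A : Type*} [MonoidWithZero A]
    [SMulZeroClass R A] {x : A} (hx : IsNilpotent x) (c : ℕ → R) :
    ∀ᶠ n in atTop, c n • x ^ n = 0 := by
  obtain ⟨N, hN⟩ := hx
  filter_upwards [eventually_ge_atTop N] with n hn
  rw [pow_eq_zero_of_le hn hN, smul_zero]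

theorem qexp_mul_qexp_of_qcommute_general {A : Type*} [Ring A] [Algebra (RatFunc ℚ) A]
    [TopologicalSpace A] (X Y : A)
    (hq : Y * X = (RatFunc.X : RatFunc ℚ) • (X * Y))
    (hX : IsNilpotent X) (hY : IsNilpotent Y) :
    qexp X * qexp Y = qexp (X + Y) := by
  unfold qexp
  rw [tsum_mul_tsum_eq_tsum_sum_antidiagonal_of_eventually_zero
    (hX.eventually_smul_pow_eq_zero qcoef) (hY.eventually_smul_pow_eq_zero qcoef)]
  refine tsum_congr fun n => ?_
  rw [add_pow_eq_sum_gaussBinom hq, smul_sum]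
  refine sum_congr rfl fun p hp => ?_
  rw [HasAntidiagonal.mem_antidiagonal] at hp
  subst hp
  rw [smul_smul, qcoef_mul_gaussBinom, smul_mul_smul_comm]

/-- Schützenberger's identity: for `q`-commuting (nilpotent) `X`, `Y`,
`E(X)·E(Y) = E(X+Y)`. -/
theorem qexp_mul_qexp_of_qcommute {A : Type*} [Ring A] [Algebra (RatFunc ℚ) A]
    [TopologicalSpace A] [T2Space A] (X Y : A)
    (hq : Y * X = (RatFunc.X : RatFunc ℚ) • (X * Y))
    (hX : IsNilpotent X) (hY : IsNilpotent Y) :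
    qexp X * qexp Y = qexp (X + Y) :=
  qexp_mul_qexp_of_qcommute_general X Y hq hX hY
end

section
/- Let X and Y be q-commuting elements (YX = qXY) of an associative algebra over the rational function field in q, and let E be the quantum exponential series E(x) = ∑_{n≥0} (-x)^n/((1-q)···(1-q^n)). Then the pentagon identity holds: E(X)·E(XY)·E(Y) = E(Y)·E(X). -/
/-! Write `c n = qcoef n = 1 / ∏_{k < n} (q^(k+1) - 1)`. For nilpotent `X`, `Y` all three series
are finite sums. Moving every `X` to the left with `Y^k X^i = q^(k i) X^i Y^k` and
`(X Y)^j = q^(j choose 2) X^j Y^j`, the pentagon becomes the coefficient identity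
`∑_j q^(j choose 2) c (a - j) c j c (b - j) = q^(a b) c a c b` for the monomial `X^a Y^b`.
Multiplying by `q^(b+1) - 1` and using `(q^(n+1) - 1) c (n + 1) = c n`, both sides satisfy the
same recursion in `(a, b)` with the same boundary values `c a`, `c b`, so they agree. -/

open Finset

theorem sum_range_add_add_eq_sum_range_min {M : Type*} [AddCommMonoid M] (N : ℕ)
    (g : ℕ → ℕ → ℕ → M) (hg : ∀ a b j, N ≤ a ∨ N ≤ b → g a b j = 0) :
    ∑ i ∈ range N, ∑ j ∈ range N, ∑ k ∈ range N, g (i + j) (j + k) j =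
      ∑ a ∈ range N, ∑ b ∈ range N, ∑ j ∈ range (min a b + 1), g a b j := by
  calc _ = ∑ x ∈ range N ×ˢ range N ×ˢ range N with x.1 + x.2.1 < N ∧ x.2.1 + x.2.2 < N,
          g (x.1 + x.2.1) (x.2.1 + x.2.2) x.2.1 := by
        rw [sum_filter_of_ne]
        · simp only [sum_product]
        · intro x _ hx
          by_contra h
          exact hx (hg _ _ _ (by omega))
    _ = ∑ y ∈ (range N ×ˢ range N).sigma fun p => range (min p.1 p.2 + 1), g y.1.1 y.1.2 y.2 := by
        refine sum_nbij' (fun x => ⟨(x.1 + x.2.1, x.2.1 + x.2.2), x.2.1⟩)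
          (fun y => (y.1.1 - y.2, y.2, y.1.2 - y.2)) ?_ ?_ ?_ ?_ fun _ _ => rfl
        · rintro ⟨i, j, k⟩ h
          simp only [mem_filter, mem_product, mem_range] at h
          simp only [mem_sigma, mem_product, mem_range]
          omega
        · rintro ⟨⟨a, b⟩, j⟩ h
          simp only [mem_sigma, mem_product, mem_range] at h
          simp only [mem_filter, mem_product, mem_range]
          omega
        · rintro ⟨i, j, k⟩ -
          simp
        · rintro ⟨⟨a, b⟩, j⟩ h
          simp only [mem_sigma, mem_product, mem_range] at h
          simp only [Sigma.mk.injEq, Prod.mk.injEq, heq_eq_eq, and_true]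
          omega
    _ = _ := by simp only [sum_sigma, sum_product]

theorem Nat.succ_choose_two (n : ℕ) : (n + 1).choose 2 = n.choose 2 + n := by
  rw [Nat.choose_succ_succ', Nat.choose_one_right, add_comm]

section QCommuting

variable {R A : Type*} [CommSemiring R] [Semiring A] [Algebra R A] {q : R} {X Y : A}

theorem qcomm_pow_right (hq : Y * X = q • (X * Y)) (i : ℕ) :
    Y * X ^ i = q ^ i • (X ^ i * Y) := by
  induction i with
  | zero => simp
  | succ i ih =>
    rw [pow_succ, ← mul_assoc, ih, smul_mul_assoc, mul_assoc, hq, mul_smul_comm, smul_smul,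
      ← mul_assoc, ← pow_succ, ← pow_succ]

theorem qcomm_pow_pow (hq : Y * X = q • (X * Y)) (k i : ℕ) :
    Y ^ k * X ^ i = q ^ (k * i) • (X ^ i * Y ^ k) := by
  induction k with
  | zero => simp
  | succ k ih =>
    rw [pow_succ, mul_assoc, qcomm_pow_right hq, mul_smul_comm, ← mul_assoc, ih, smul_mul_assoc,
      smul_smul, mul_assoc, ← pow_succ, ← pow_add, add_one_mul, add_comm]

theorem qcomm_mul_pow (hq : Y * X = q • (X * Y)) (n : ℕ) :
    (X * Y) ^ n = q ^ n.choose 2 • (X ^ n * Y ^ n) := by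
  induction n with
  | zero => simp
  | succ n ih =>
    rw [pow_succ', ih, mul_smul_comm, mul_assoc, ← mul_assoc Y, qcomm_pow_right hq,
      smul_mul_assoc, mul_smul_comm, smul_smul, mul_assoc, ← pow_succ', ← mul_assoc, ← pow_succ',
      ← pow_add, Nat.succ_choose_two]

theorem qcomm_sum_mul_sum (hq : Y * X = q • (X * Y)) (s t : Finset ℕ) (α β : ℕ → R) :
    (∑ b ∈ t, β b • Y ^ b) * (∑ a ∈ s, α a • X ^ a) =
      ∑ a ∈ s, ∑ b ∈ t, (q ^ (a * b) * α a * β b) • (X ^ a * Y ^ b) := by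
  rw [sum_mul_sum, sum_comm]
  refine sum_congr rfl fun a _ => sum_congr rfl fun b _ => ?_
  rw [smul_mul_smul_comm, qcomm_pow_pow hq, smul_smul, mul_comm b a]
  congr 1
  ring

theorem qcomm_sum_mul_sum_mul_sum (hq : Y * X = q • (X * Y)) {N : ℕ} (hX : X ^ N = 0)
    (hY : Y ^ N = 0) (α β γ : ℕ → R) :
    (∑ i ∈ range N, α i • X ^ i) * (∑ j ∈ range N, β j • (X * Y) ^ j) *
        (∑ k ∈ range N, γ k • Y ^ k) =
      ∑ a ∈ range N, ∑ b ∈ range N,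
        (∑ j ∈ range (min a b + 1), q ^ j.choose 2 * α (a - j) * β j * γ (b - j)) •
          (X ^ a * Y ^ b) := by
  simp_rw [sum_smul]
  rw [← sum_range_add_add_eq_sum_range_min N
    (fun a b j => (q ^ j.choose 2 * α (a - j) * β j * γ (b - j)) • (X ^ a * Y ^ b)) ?vanish]
  case vanish =>
    rintro a b j (ha | hb)
    · rw [pow_eq_zero_of_le ha hX, zero_mul, smul_zero]
    · rw [pow_eq_zero_of_le hb hY, mul_zero, smul_zero]
  rw [sum_mul_sum, sum_mul]
  refine sum_congr rfl fun i _ => ?_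
  rw [sum_mul]
  refine sum_congr rfl fun j _ => ?_
  rw [mul_sum]
  refine sum_congr rfl fun k _ => ?_
  rw [qcomm_mul_pow hq, add_tsub_cancel_right, add_tsub_cancel_left]
  simp only [smul_mul_smul_comm, smul_smul, pow_add, mul_assoc]
  congr 1
  ring

end QCommuting

theorem qexp_eq_sum_range {A : Type*} [Ring A] [Algebra (RatFunc ℚ) A] [TopologicalSpace A]
    {x : A} {N : ℕ} (hx : x ^ N = 0) : qexp x = ∑ n ∈ range N, qcoef n • x ^ n :=
  tsum_eq_sum fun n hn => by
    rw [pow_eq_zero_of_le (not_lt.mp (mem_range.not.mp hn)) hx, smul_zero]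

section PentagonCoeff

local notation "q" => (RatFunc.X : RatFunc ℚ)

theorem RatFunc.X_pow_succ_ne_one (n : ℕ) : q ^ (n + 1) ≠ 1 := by
  rw [← RatFunc.algebraMap_X, ← map_pow, ← map_one (algebraMap (Polynomial ℚ) (RatFunc ℚ)),
    (RatFunc.algebraMap_injective ℚ).ne_iff]
  intro h
  simpa using congrArg Polynomial.natDegree h

theorem qcoef_zero : qcoef 0 = 1 := by
  simp [qcoef]

theorem X_pow_succ_sub_one_mul_qcoef_succ (n : ℕ) :
    (q ^ (n + 1) - 1) * qcoef (n + 1) = qcoef n := by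
  have hn : (1 : RatFunc ℚ) - q ^ (n + 1) ≠ 0 := sub_ne_zero.mpr (RatFunc.X_pow_succ_ne_one n).symm
  have hprod : ∏ k ∈ range n, (1 - q ^ (k + 1)) ≠ 0 :=
    prod_ne_zero_iff.mpr fun k _ => sub_ne_zero.mpr (RatFunc.X_pow_succ_ne_one k).symm
  rw [qcoef, qcoef, prod_range_succ, mul_div_assoc', div_eq_div_iff (mul_ne_zero hprod hn) hprod]
  ring

noncomputable def pentagonTerm (a b j : ℕ) : RatFunc ℚ :=
  q ^ j.choose 2 * qcoef (a - j) * qcoef j * qcoef (b - j)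

noncomputable def pentagonCoeff (a b : ℕ) : RatFunc ℚ :=
  ∑ j ∈ range (min a b + 1), pentagonTerm a b j

theorem pentagonCoeff_zero_right (a : ℕ) : pentagonCoeff a 0 = qcoef a := by
  simp [pentagonCoeff, pentagonTerm, qcoef_zero]

theorem pentagonCoeff_zero_left (b : ℕ) : pentagonCoeff 0 b = qcoef b := by
  simp [pentagonCoeff, pentagonTerm, qcoef_zero]

theorem X_pow_succ_sub_one_mul_pentagonTerm (a b j : ℕ) (hj : j ≤ min (a + 1) (b + 1)) :
    (q ^ (b + 1) - 1) * pentagonTerm (a + 1) (b + 1) j =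
      (if j ≤ b then pentagonTerm (a + 1) b j else 0) +
        q ^ b * (if j = 0 then 0 else pentagonTerm a b (j - 1)) := by
  have hc := X_pow_succ_sub_one_mul_qcoef_succ
  obtain _ | i := j
  · simp only [pentagonTerm, zero_le, if_true, Nat.choose_zero_succ, pow_zero, tsub_zero,
      qcoef_zero]
    linear_combination qcoef (a + 1) * hc b
  obtain ⟨m, rfl⟩ | rfl : (∃ m, b = i + 1 + m) ∨ b = i := by
    rcases le_or_gt (i + 1) b with h | h
    · exact .inl (Nat.exists_eq_add_of_le h)
    · exact .inr (by omega)
  · simp only [pentagonTerm, show i + 1 ≤ i + 1 + m by omega, if_true, add_tsub_cancel_right,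
      Nat.succ_ne_zero, if_false, Nat.succ_choose_two, show a + 1 - (i + 1) = a - i by omega,
      show i + 1 + m + 1 - (i + 1) = m + 1 by omega, show i + 1 + m - (i + 1) = m by omega,
      show i + 1 + m - i = m + 1 by omega]
    linear_combination q ^ (i.choose 2) * qcoef (a - i) * q ^ i * qcoef (i + 1) * hc m +
      q ^ (i.choose 2) * qcoef (a - i) * q ^ (i + 1 + m) * qcoef (m + 1) * hc i
  · simp only [pentagonTerm, show ¬ b + 1 ≤ b by omega, if_false, zero_add, add_tsub_cancel_right,
      Nat.succ_ne_zero, Nat.succ_choose_two, show a + 1 - (b + 1) = a - b by omega, tsub_self,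
      qcoef_zero]
    linear_combination q ^ (b.choose 2) * qcoef (a - b) * q ^ b * hc b

theorem X_pow_succ_sub_one_mul_pentagonCoeff (a b : ℕ) :
    (q ^ (b + 1) - 1) * pentagonCoeff (a + 1) (b + 1) =
      pentagonCoeff (a + 1) b + q ^ b * pentagonCoeff a b := by
  rw [pentagonCoeff, mul_sum, sum_congr rfl fun j hj => X_pow_succ_sub_one_mul_pentagonTerm a b j
    (Nat.lt_succ_iff.mp (mem_range.mp hj)), sum_add_distrib, ← mul_sum, ← sum_filter,
    show min (a + 1) (b + 1) = min a b + 1 by omega, sum_range_succ']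
  congr 1
  · rw [pentagonCoeff]
    congr 1
    ext j
    simp only [mem_filter, mem_range]
    omega
  · simp [pentagonCoeff]

theorem pentagonCoeff_eq (a b : ℕ) : pentagonCoeff a b = q ^ (a * b) * qcoef a * qcoef b := by
  induction b generalizing a with
  | zero => simp [pentagonCoeff_zero_right, qcoef_zero]
  | succ b ih =>
    obtain _ | a := a
    · simp [pentagonCoeff_zero_left, qcoef_zero]
    apply mul_left_cancel₀ (sub_ne_zero.mpr (RatFunc.X_pow_succ_ne_one b))
    rw [X_pow_succ_sub_one_mul_pentagonCoeff, ih, ih]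
    linear_combination -q ^ (a * b + b) * qcoef b * X_pow_succ_sub_one_mul_qcoef_succ a -
      q ^ ((a + 1) * (b + 1)) * qcoef (a + 1) * X_pow_succ_sub_one_mul_qcoef_succ b

end PentagonCoeff

theorem qexp_pentagon_general {A : Type*} [Ring A] [Algebra (RatFunc ℚ) A]
    [TopologicalSpace A] (X Y : A)
    (hq : Y * X = (RatFunc.X : RatFunc ℚ) • (X * Y))
    (hX : IsNilpotent X) (hY : IsNilpotent Y) :
    qexp X * qexp (X * Y) * qexp Y = qexp Y * qexp X := by
  obtain ⟨N, hXN, hYN⟩ : ∃ N, X ^ N = 0 ∧ Y ^ N = 0 := by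
    obtain ⟨m, hm⟩ := hX
    obtain ⟨n, hn⟩ := hY
    exact ⟨max m n, pow_eq_zero_of_le (le_max_left m n) hm, pow_eq_zero_of_le (le_max_right m n) hn⟩
  have hXYN : (X * Y) ^ N = 0 := by rw [qcomm_mul_pow hq, hXN, zero_mul, smul_zero]
  rw [qexp_eq_sum_range hXN, qexp_eq_sum_range hYN, qexp_eq_sum_range hXYN,
    qcomm_sum_mul_sum_mul_sum hq hXN hYN, qcomm_sum_mul_sum hq]
  refine sum_congr rfl fun a _ => sum_congr rfl fun b _ => ?_
  congr 1
  exact pentagonCoeff_eq a b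

/-- The pentagon identity: for `q`-commuting (nilpotent) `X`, `Y`,
`E(X)·E(XY)·E(Y) = E(Y)·E(X)`. -/
theorem qexp_pentagon {A : Type*} [Ring A] [Algebra (RatFunc ℚ) A]
    [TopologicalSpace A] [T2Space A] (X Y : A)
    (hq : Y * X = (RatFunc.X : RatFunc ℚ) • (X * Y))
    (hX : IsNilpotent X) (hY : IsNilpotent Y) :
    qexp X * qexp (X * Y) * qexp Y = qexp Y * qexp X :=
  qexp_pentagon_general X Y hq hX hY
end

section
/- In the group B(2,N) with generators R_{ab} for 1 ≤ a < b ≤ N, where R_{ab} and R_{a'b'} commute if {a,b} ∩ {a',b'} = ∅ and R_{ab}·R_{ac}·R_{bc} = R_{bc}·R_{ac}·R_{ab} for all a < b < c (Yang–Baxter relations), the lexicographically ordered product W(2,N) = ∏→_{1≤a<b≤N} R_{ab} equals the reversely ordered product ∏←_{1≤a<b≤N} R_{ab}. -/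
/-!
Write `W l` for the product of the `R a b` over the pairs `a < b` of an increasing list `l` of
indices, in lexicographic order, so that `W (a :: l) = (∏_{c ∈ l} R a c) * W l`. Iterating the
Yang–Baxter relation along a row gives, for `a < b` below all of `l`,
`R a b * ∏_{c ∈ l} R a c * ∏_{c ∈ l} R b c = ∏_{c ∈ l} R b c * ∏_{c ∈ l} R a c * R a b`.
With it, a row `∏_{c ∈ l} R a c` with `a` below `l` moves through `W l` and comes out reversed,
and induction on `l` turns `W l` into its reverse.
-/

/-- The list of pairs `(a,b)` with `1 ≤ a < b ≤ N`, in lexicographic order. -/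
def pairList (N : ℕ) : List (ℕ × ℕ) :=
  (((List.range (N + 1)).flatMap fun a => (List.range (N + 1)).map fun b => (a, b)).filter
    fun p => decide (1 ≤ p.1 ∧ p.1 < p.2))

namespace List

variable {α : Type*}

def orderedPairs : List α → List (α × α)
  | [] => []
  | a :: l => l.map (a, ·) ++ orderedPairs l

theorem mem_orderedPairs {p : α × α} {l : List α} :
    p ∈ orderedPairs l ↔ [p.1, p.2].Sublist l := by
  induction l with
  | nil => simp [orderedPairs]
  | cons a l ih =>
    obtain ⟨x, y⟩ := p
    simp [orderedPairs, ih, sublist_cons_iff, or_comm, eq_comm, and_comm]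

theorem lt_of_mem_orderedPairs [Preorder α] {p : α × α} {l : List α}
    (hl : l.Pairwise (· < ·)) (hp : p ∈ orderedPairs l) : p.1 < p.2 :=
  pairwise_pair.1 (hl.sublist (mem_orderedPairs.1 hp))

theorem filter_lt_product [LinearOrder α] {l : List α} (hl : l.Pairwise (· < ·)) :
    (l ×ˢ l).filter (fun p => p.1 < p.2) = orderedPairs l := by
  induction l with
  | nil => rfl
  | cons a l ih =>
    obtain ⟨ha, hl⟩ := pairwise_cons.1 hl
    have head : ((a :: l).map (a, ·)).filter (fun p => p.1 < p.2) = l.map (a, ·) := by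
      simp only [filter_map, Function.comp_def]
      rw [filter_cons_of_neg (by simp), filter_eq_self.2 (by simpa using ha)]
    have tail : (l ×ˢ (a :: l)).filter (fun p => p.1 < p.2) =
        (l ×ˢ l).filter (fun p => p.1 < p.2) := by
      rw [SProd.sprod, instSProd]
      simp only [product, filter_flatMap]
      refine flatMap_congr fun b hb => ?_
      simp [(ha b hb).not_gt]
    rw [product_cons, filter_append, head, tail, ih hl, orderedPairs]

end List

namespace B2

open List

variable {α M : Type*} [Monoid M]

def pairProd (R : α → α → M) (ps : List (α × α)) : M := (ps.map fun p => R p.1 p.2).prod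

theorem pairProd_orderedPairs_cons (R : α → α → M) (a : α) (l : List α) :
    pairProd R (orderedPairs (a :: l)) = (l.map (R a)).prod * pairProd R (orderedPairs l) := by
  simp [pairProd, orderedPairs, Function.comp_def]

theorem pairProd_reverse_orderedPairs_cons (R : α → α → M) (a : α) (l : List α) :
    pairProd R (orderedPairs (a :: l)).reverse =
      pairProd R (orderedPairs l).reverse * (l.reverse.map (R a)).prod := by
  simp [pairProd, orderedPairs, Function.comp_def, List.map_reverse]

structure Relations [LT α] (R : α → α → M) (s : Set α) : Prop where
  commute : ∀ ⦃a b c d⦄, a ∈ s → b ∈ s → c ∈ s → d ∈ s → a < b → c < d →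
    a ≠ c → a ≠ d → b ≠ c → b ≠ d → Commute (R a b) (R c d)
  yang_baxter : ∀ ⦃a b c⦄, a ∈ s → b ∈ s → c ∈ s → a < b → b < c →
    R a b * R a c * R b c = R b c * R a c * R a b

namespace Relations

variable [LinearOrder α] {R : α → α → M} {s : Set α}

theorem yang_baxter_prod_map (h : Relations R s) {a b : α} (ha : a ∈ s) (hb : b ∈ s)
    (hab : a < b) {l : List α} (hl : l.Nodup) (hls : ∀ c ∈ l, c ∈ s ∧ b < c) :
    R a b * (l.map (R a)).prod * (l.map (R b)).prod =
      (l.map (R b)).prod * (l.map (R a)).prod * R a b := by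
  induction l with
  | nil => simp
  | cons c l ih =>
    obtain ⟨hcl, hl⟩ := List.nodup_cons.1 hl
    obtain ⟨⟨hc, hbc⟩, hls⟩ := List.forall_mem_cons.1 hls
    set A := (l.map (R a)).prod
    set B := (l.map (R b)).prod
    have hne : ∀ c' ∈ l, c' ≠ c := fun c' hc' h => hcl (h ▸ hc')
    have hcA : Commute A (R b c) := Commute.list_prod_left _ _ <| by
      simp only [List.mem_map]
      rintro _ ⟨c', hc', rfl⟩
      have := hls c' hc'
      exact h.commute ha this.1 hb hc (hab.trans this.2) hbc (by order) (by order) (by order)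
        (hne c' hc')
    have hAB : Commute (R a c) B := Commute.list_prod_right _ _ <| by
      simp only [List.mem_map]
      rintro _ ⟨c', hc', rfl⟩
      have := hls c' hc'
      exact h.commute ha hc hb this.1 (hab.trans hbc) this.2 (by order) (by order) (by order)
        (hne c' hc').symm
    calc R a b * (R a c * A) * (R b c * B)
        = R a b * R a c * R b c * (A * B) := by simp only [mul_assoc, hcA.left_comm]
      _ = R b c * R a c * (R a b * A * B) := by
        rw [h.yang_baxter ha hb hc hab hbc]; simp only [mul_assoc]
      _ = R b c * R a c * (B * A * R a b) := by rw [ih hl hls]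
      _ = R b c * B * (R a c * A) * R a b := by simp only [mul_assoc, hAB.left_comm]

theorem commute_pairProd_orderedPairs (h : Relations R s) {a b : α} (ha : a ∈ s) (hb : b ∈ s)
    (hab : a < b) {l : List α} (hl : l.Pairwise (· < ·)) (hls : ∀ c ∈ l, c ∈ s ∧ b < c) :
    Commute (R a b) (pairProd R (orderedPairs l)) := by
  refine Commute.list_prod_right _ _ ?_
  simp only [List.mem_map]
  rintro _ ⟨p, hp, rfl⟩
  have hlt := lt_of_mem_orderedPairs hl hp
  have h₁ := hls p.1 ((mem_orderedPairs.1 hp).subset (by simp))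
  have h₂ := hls p.2 ((mem_orderedPairs.1 hp).subset (by simp))
  exact h.commute ha hb h₁.1 h₂.1 hab hlt (by order) (by order) (by order) (by order)

theorem prod_map_mul_pairProd_orderedPairs (h : Relations R s) {a : α} (ha : a ∈ s)
    {l : List α} (hl : l.Pairwise (· < ·)) (hls : ∀ c ∈ l, c ∈ s ∧ a < c) :
    (l.map (R a)).prod * pairProd R (orderedPairs l) =
      pairProd R (orderedPairs l) * (l.reverse.map (R a)).prod := by
  induction l with
  | nil => simp [pairProd, orderedPairs]
  | cons m l ih =>
    obtain ⟨hml, hl⟩ := List.pairwise_cons.1 hl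
    obtain ⟨⟨hm, ham⟩, hls⟩ := List.forall_mem_cons.1 hls
    set A := (l.map (R a)).prod
    set B := (l.map (R m)).prod
    set W := pairProd R (orderedPairs l)
    have hYB : R a m * A * B = B * A * R a m :=
      h.yang_baxter_prod_map ha hm ham hl.nodup fun c hc => ⟨(hls c hc).1, hml c hc⟩
    have hW : Commute (R a m) W :=
      h.commute_pairProd_orderedPairs ha hm ham hl fun c hc => ⟨(hls c hc).1, hml c hc⟩
    rw [pairProd_orderedPairs_cons, List.reverse_cons, List.map_append, List.prod_append,
      List.map_singleton, List.prod_singleton]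
    calc R a m * A * (B * W)
        = B * A * R a m * W := by rw [← hYB]; simp only [mul_assoc]
      _ = B * (A * W) * R a m := by simp only [mul_assoc, hW.eq]
      _ = B * W * ((l.reverse.map (R a)).prod * R a m) := by
        rw [ih hl hls]; simp only [mul_assoc]

theorem pairProd_reverse_orderedPairs (h : Relations R s) {l : List α}
    (hl : l.Pairwise (· < ·)) (hls : ∀ c ∈ l, c ∈ s) :
    pairProd R (orderedPairs l).reverse = pairProd R (orderedPairs l) := by
  induction l with
  | nil => rfl
  | cons a l ih =>
    obtain ⟨hal, hl⟩ := List.pairwise_cons.1 hl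
    obtain ⟨ha, hls⟩ := List.forall_mem_cons.1 hls
    rw [pairProd_reverse_orderedPairs_cons, pairProd_orderedPairs_cons, ih hl hls,
      h.prod_map_mul_pairProd_orderedPairs ha hl fun c hc => ⟨hls c hc, hal c hc⟩]

end Relations

theorem pairList_eq_orderedPairs (N : ℕ) : pairList N = orderedPairs (List.range' 1 N) := by
  have hrange : List.range (N + 1) = 0 :: List.range' 1 N := by
    rw [List.range_eq_range', List.range'_succ]
  have hsplit : pairList N =
      ((List.range (N + 1) ×ˢ List.range (N + 1)).filter fun p => p.1 < p.2).filter
        fun p => 1 ≤ p.1 := by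
    rw [List.filter_filter]
    simp only [pairList, Bool.decide_and]
    rfl
  rw [hsplit, filter_lt_product List.pairwise_lt_range, hrange, orderedPairs, List.filter_append,
    List.filter_eq_nil_iff.2 (by simp +contextual), List.filter_eq_self.2, List.nil_append]
  intro p hp
  simpa using (List.mem_range'_1.1 ((mem_orderedPairs.1 hp).subset List.mem_cons_self)).1

end B2

/-- In the group `B(2,N)` (generators `R_{ab}`, `1 ≤ a < b ≤ N`, commuting when their
index sets are disjoint and satisfying the Yang–Baxter relations), the lexicographically
ordered product of all generators equals the reversely ordered product. -/
theorem word_eq_reverse_word_B2 {G : Type*} [Group G] (N : ℕ) (R : ℕ → ℕ → G)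
    (hcomm : ∀ a b a' b' : ℕ, 1 ≤ a → a < b → b ≤ N → 1 ≤ a' → a' < b' → b' ≤ N →
      ({a, b} : Finset ℕ) ∩ {a', b'} = ∅ → R a b * R a' b' = R a' b' * R a b)
    (hYB : ∀ a b c : ℕ, 1 ≤ a → a < b → b < c → c ≤ N →
      R a b * R a c * R b c = R b c * R a c * R a b) :
    ((pairList N).map fun p => R p.1 p.2).prod =
      ((pairList N).reverse.map fun p => R p.1 p.2).prod := by
  have hR : B2.Relations R (Set.Icc 1 N) :=
    { commute := fun a b c d ha hb hc hd hab hcd hac had hbc hbd =>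
        hcomm a b c d ha.1 hab hb.2 hc.1 hcd hd.2 <| by
          ext x
          simp only [Finset.mem_inter, Finset.mem_insert, Finset.mem_singleton,
            Finset.notMem_empty, iff_false]
          omega
      yang_baxter := fun a b c ha _ hc hab hbc => hYB a b c ha.1 hab hbc hc.2 }
  rw [B2.pairList_eq_orderedPairs]
  refine (hR.pairProd_reverse_orderedPairs List.pairwise_lt_range' fun c hc => ?_).symm
  rw [List.mem_range'_1] at hc
  exact ⟨hc.1, by omega⟩
end

section
/- In the group B(n,N) (generators R_{a1,...,an} for 1 ≤ a1 < ... < an ≤ N, commuting unless their index sets share exactly n−1 elements, and satisfying the n-simplex relations ∏→_{1≤j≤n+1} R_{a1,...,âj,...,a(n+1)} = ∏←_{1≤j≤n+1} R_{a1,...,âj,...,a(n+1)} for each (n+1)-subset), the lexicographically ordered product W(n,N) of all generators equals the same product taken in the reverse order. -/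
/-- Lexicographic order on finite subsets of `ℕ`, comparing their increasing
enumerations lexicographically. -/
def finsetLex (s t : Finset ℕ) : Prop :=
  List.Lex (· < ·) (s.sort (· ≤ ·)) (t.sort (· ≤ ·))

/-! Write `S(A, k)` for the `k`-subsets of a finite linearly ordered set `A` in lexicographic
order; splitting off the least element `a` of `A` gives
`S(A, k + 1) = a ∪ S(A \ a, k) ++ S(A \ a, k + 1)`.

The theorem is the case `P = Q = 1` of the exchange identity
`X(S(A, m)) * P(S(A, m + 1)) = Q(S(A, m + 1)) * X(reverse S(A, m))`
for a family `X` on `m`-subsets and families `P`, `Q` on `(m + 1)`-subsets, assumed for each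
single `(m + 1)`-set (for `P = Q = 1` this is the simplex relation) together with the
commutations of `B(n, N)`. The identity is proved by induction on `A`: after splitting off `a`,
it follows from the identity for `A \ a` at level `m + 1` and, at level `m`, for the system
`t ↦ X (a ∪ t)`, `u ↦ X u * P (a ∪ u)`, `u ↦ Q (a ∪ u) * X u`, whose single-set case is the
single-set case of the original system for `a ∪ u`. -/

section LexSubsets

variable {α : Type*} [LinearOrder α]

-- `List.sublistsLen` lists the sublists in reverse lexicographic order.
def lexSubsets (A : Finset α) (k : ℕ) : List (Finset α) :=
  ((A.sort (· ≤ ·)).sublistsLen k).reverse.map List.toFinset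

@[simp]
theorem lexSubsets_zero (A : Finset α) : lexSubsets A 0 = [∅] := by
  simp [lexSubsets]

@[simp]
theorem lexSubsets_empty_succ (k : ℕ) : lexSubsets (∅ : Finset α) (k + 1) = [] := by
  simp [lexSubsets]

theorem lexSubsets_insert_succ {a : α} {A : Finset α} (ha : ∀ b ∈ A, a < b) (k : ℕ) :
    lexSubsets (insert a A) (k + 1) = (lexSubsets A k).map (insert a) ++ lexSubsets A (k + 1) := by
  rw [lexSubsets, Finset.sort_insert _ (fun b hb => (ha b hb).le) fun h => lt_irrefl a (ha a h)]
  simp [lexSubsets, List.map_reverse, Function.comp_def]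

theorem lexSubsets_card (A : Finset α) : lexSubsets A A.card = [A] := by
  rw [lexSubsets, ← Finset.length_sort (· ≤ ·), List.sublistsLen_length]
  simp

theorem mem_lexSubsets {A s : Finset α} {k : ℕ} : s ∈ lexSubsets A k ↔ s ⊆ A ∧ s.card = k := by
  simp only [lexSubsets, List.mem_map, List.mem_reverse, List.mem_sublistsLen]
  constructor
  · rintro ⟨l, ⟨hl, rfl⟩, rfl⟩
    refine ⟨fun b hb => ?_, List.toFinset_card_of_nodup ((A.sort_nodup _).sublist hl)⟩
    exact (Finset.mem_sort (· ≤ ·)).1 (hl.subset (List.mem_toFinset.1 hb))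
  · rintro ⟨hsA, rfl⟩
    refine ⟨s.sort (· ≤ ·), ⟨?_, Finset.length_sort _⟩, Finset.sort_toFinset _ _⟩
    refine List.sublist_of_subperm_of_pairwise ?_ (s.pairwise_sort _) (A.pairwise_sort _)
    exact List.subperm_of_subset (s.sort_nodup _) fun b hb => by simpa using hsA (by simpa using hb)

theorem nodup_lexSubsets (A : Finset α) (k : ℕ) : (lexSubsets A k).Nodup := by
  refine List.Nodup.map_on (fun l hl l' hl' h => ?_)
    (List.nodup_reverse.2 (List.nodup_sublistsLen k (A.sort_nodup _)))
  simp only [List.mem_reverse, List.mem_sublistsLen] at hl hl'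
  rw [← (List.toFinset_sort (· ≤ ·) ((A.sort_nodup _).sublist hl.1)).2
      ((A.pairwise_sort _).sublist hl.1),
    ← (List.toFinset_sort (· ≤ ·) ((A.sort_nodup _).sublist hl'.1)).2
      ((A.pairwise_sort _).sublist hl'.1), h]

theorem reverse_lexSubsets {A : Finset α} {k : ℕ} (hA : A.card = k + 1) :
    (lexSubsets A k).reverse = (A.sort (· ≤ ·)).map A.erase := by
  induction A using Finset.induction_on_min generalizing k with
  | empty => simp at hA
  | insert a A ha ih =>
    have haA : a ∉ A := fun h => lt_irrefl a (ha a h)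
    rw [Finset.card_insert_of_notMem haA] at hA
    rw [Finset.sort_insert _ (fun b hb => (ha b hb).le) haA, List.map_cons,
      Finset.erase_insert haA]
    cases k with
    | zero => simp [Finset.card_eq_zero.1 (by omega : A.card = 0)]
    | succ k =>
      rw [lexSubsets_insert_succ ha, show k + 1 = A.card by omega, lexSubsets_card,
        List.reverse_append, ← List.map_reverse, ih (by omega), List.map_map,
        List.reverse_singleton, List.singleton_append]
      congr 1
      refine List.map_congr_left fun b hb => ?_
      exact (Finset.erase_insert_of_ne (ha b ((Finset.mem_sort _).1 hb)).ne).symm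

end LexSubsets

instance : Std.Irrefl finsetLex := ⟨fun s => irrefl (r := List.Lex (· < ·)) (s.sort (· ≤ ·))⟩

instance : Std.Antisymm finsetLex :=
  ⟨fun _ _ h₁ h₂ => absurd h₂ (asymm (r := List.Lex (· < ·)) h₁)⟩

theorem finsetLex_insert_insert {a : ℕ} {s t : Finset ℕ} (hs : ∀ b ∈ s, a < b)
    (ht : ∀ b ∈ t, a < b) (h : finsetLex s t) : finsetLex (insert a s) (insert a t) := by
  unfold finsetLex
  rw [Finset.sort_insert _ (fun b hb => (hs b hb).le) fun h => lt_irrefl a (hs a h),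
    Finset.sort_insert _ (fun b hb => (ht b hb).le) fun h => lt_irrefl a (ht a h)]
  exact .cons h

theorem finsetLex_insert_of_forall_lt {a : ℕ} {s t : Finset ℕ} (hs : ∀ b ∈ s, a < b)
    (ht : t.Nonempty) (hlt : ∀ b ∈ t, a < b) : finsetLex (insert a s) t := by
  obtain ⟨b, l, hbl⟩ := List.exists_cons_of_ne_nil (l := t.sort (· ≤ ·))
    (by simpa [← List.length_pos_iff] using ht)
  have hb : b ∈ t := (Finset.mem_sort _).1 (hbl ▸ List.mem_cons_self)
  unfold finsetLex
  rw [hbl, Finset.sort_insert _ (fun b hb => (hs b hb).le) fun h => lt_irrefl a (hs a h)]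
  exact .rel (hlt b hb)

theorem pairwise_lexSubsets (A : Finset ℕ) (k : ℕ) : (lexSubsets A k).Pairwise finsetLex := by
  induction A using Finset.induction_on_min generalizing k with
  | empty => cases k <;> simp
  | insert a A ha ih =>
    cases k with
    | zero => simp
    | succ k =>
      have hlt : ∀ s ∈ lexSubsets A k, ∀ b ∈ s, a < b := fun s hs b hb =>
        ha b ((mem_lexSubsets.1 hs).1 hb)
      rw [lexSubsets_insert_succ ha, List.pairwise_append, List.pairwise_map]
      refine ⟨(ih k).imp_of_mem fun hs ht h => finsetLex_insert_insert (hlt _ hs) (hlt _ ht) h,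
        ih (k + 1), ?_⟩
      simp only [List.mem_map]
      rintro _ ⟨s, hs, rfl⟩ t ht
      obtain ⟨htA, htk⟩ := mem_lexSubsets.1 ht
      exact finsetLex_insert_of_forall_lt (hlt s hs) (Finset.card_pos.1 (by omega))
        fun b hb => ha b (htA hb)

theorem eq_lexSubsets_of_pairwise {A : Finset ℕ} {k : ℕ} {L : List (Finset ℕ)}
    (hL : ∀ s, s ∈ L ↔ s ⊆ A ∧ s.card = k) (hsorted : L.Pairwise finsetLex) :
    L = lexSubsets A k :=
  List.Subset.antisymm_of_pairwise hsorted (pairwise_lexSubsets A k)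
    (fun s hs => mem_lexSubsets.2 ((hL s).1 hs)) fun s hs => (hL s).2 (mem_lexSubsets.1 hs)

theorem List.prod_map_mul_of_pairwise_commute {M ι : Type*} [Monoid M] {f g : ι → M}
    {l : List ι} (h : l.Pairwise fun a b => Commute (g a) (f b)) :
    (l.map fun a => f a * g a).prod = (l.map f).prod * (l.map g).prod := by
  induction l with
  | nil => simp
  | cons a l ih =>
    rw [List.pairwise_cons] at h
    have hc : Commute (g a) (l.map f).prod :=
      Commute.list_prod_right _ _ (by simpa using h.1)
    simp only [List.map_cons, List.prod_cons, ih h.2]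
    rw [mul_assoc, mul_assoc, ← mul_assoc (g a), hc.eq, mul_assoc]

section Commutation

variable {α G : Type*} [Monoid G]

def CommuteUnlessFacet (A : Finset α) (m : ℕ) (X Y : Finset α → G) : Prop :=
  ∀ t u, t ⊆ A → u ⊆ A → t.card = m → u.card = m + 1 → ¬t ⊆ u → Commute (X t) (Y u)

variable {A B : Finset α} {m : ℕ} {X Y Z : Finset α → G}

theorem CommuteUnlessFacet.mono (h : CommuteUnlessFacet B m X Y) (hAB : A ⊆ B) :
    CommuteUnlessFacet A m X Y :=
  fun t u ht hu => h t u (ht.trans hAB) (hu.trans hAB)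

theorem CommuteUnlessFacet.mul (hY : CommuteUnlessFacet A m X Y)
    (hZ : CommuteUnlessFacet A m X Z) : CommuteUnlessFacet A m X fun u => Y u * Z u :=
  fun t u ht hu htm hum htu => (hY t u ht hu htm hum htu).mul_right (hZ t u ht hu htm hum htu)

variable [DecidableEq α] {a : α}

def CommuteUnlessAdjacent (A : Finset α) (m : ℕ) (X : Finset α → G) : Prop :=
  ∀ s t, s ⊆ A → t ⊆ A → s.card = m → t.card = m → (s ∩ t).card ≠ m - 1 → Commute (X s) (X t)

theorem CommuteUnlessAdjacent.mono (h : CommuteUnlessAdjacent B m X) (hAB : A ⊆ B) :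
    CommuteUnlessAdjacent A m X :=
  fun s t hs ht => h s t (hs.trans hAB) (ht.trans hAB)

theorem CommuteUnlessAdjacent.comp_insert (ha : a ∉ A)
    (h : CommuteUnlessAdjacent (insert a A) (m + 1) X) :
    CommuteUnlessAdjacent A m fun t => X (insert a t) := by
  intro s t hs ht hsm htm hst
  refine h _ _ (Finset.insert_subset_insert a hs) (Finset.insert_subset_insert a ht)
    (by rw [Finset.card_insert_of_notMem (fun h => ha (hs h)), hsm])
    (by rw [Finset.card_insert_of_notMem (fun h => ha (ht h)), htm]) ?_
  rw [← Finset.insert_inter_distrib,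
    Finset.card_insert_of_notMem fun h => ha (hs (Finset.mem_inter.1 h).1)]
  omega

theorem CommuteUnlessAdjacent.mul (hY : CommuteUnlessAdjacent A m Y)
    (hZ : CommuteUnlessAdjacent A m Z)
    (hYZ : ∀ u v, u ⊆ A → v ⊆ A → u.card = m → v.card = m → u ≠ v → Commute (Y u) (Z v)) :
    CommuteUnlessAdjacent A m fun u => Y u * Z u := by
  intro u v hu hv hum hvm huv
  obtain rfl | hne := eq_or_ne u v
  · exact .refl _
  exact ((hY u v hu hv hum hvm huv).mul_right (hYZ u v hu hv hum hvm hne)).mul_left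
    (((hYZ v u hv hu hvm hum hne.symm).symm).mul_right (hZ u v hu hv hum hvm huv))

theorem CommuteUnlessFacet.comp_insert (ha : a ∉ A)
    (h : CommuteUnlessFacet (insert a A) (m + 1) X Y) :
    CommuteUnlessFacet A m (fun t => X (insert a t)) fun u => Y (insert a u) := by
  intro t u ht hu htm hum htu
  refine h _ _ (Finset.insert_subset_insert a ht) (Finset.insert_subset_insert a hu)
    (by rw [Finset.card_insert_of_notMem (fun h => ha (ht h)), htm])
    (by rw [Finset.card_insert_of_notMem (fun h => ha (hu h)), hum]) ?_
  rwa [Finset.insert_subset_insert_iff fun h => ha (ht h)]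

theorem CommuteUnlessAdjacent.commuteUnlessFacet_insert (ha : a ∉ A)
    (h : CommuteUnlessAdjacent (insert a A) (m + 1) X) :
    CommuteUnlessFacet A m (fun t => X (insert a t)) X := by
  intro t u ht hu htm hum htu
  refine h _ _ (Finset.insert_subset_insert a ht) (hu.trans (Finset.subset_insert a A))
    (by rw [Finset.card_insert_of_notMem (fun h => ha (ht h)), htm]) hum ?_
  have : (t ∩ u).card < t.card :=
    Finset.card_lt_card (Finset.ssubset_iff_subset_ne.2 ⟨Finset.inter_subset_left,
      fun h => htu (Finset.inter_eq_left.1 h)⟩)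
  rw [Finset.insert_inter_of_notMem fun h => ha (hu h)]
  omega

theorem CommuteUnlessFacet.commute_insert_of_ne (ha : a ∉ A)
    (h : CommuteUnlessFacet (insert a A) m X Y) {u v : Finset α} (hu : u ⊆ A) (hv : v ⊆ A)
    (hum : u.card = m) (hvm : v.card = m) (huv : u ≠ v) : Commute (X u) (Y (insert a v)) := by
  refine h _ _ (hu.trans (Finset.subset_insert a A)) (Finset.insert_subset_insert a hv) hum
    (by rw [Finset.card_insert_of_notMem (fun h => ha (hv h)), hvm]) fun huv' => huv ?_
  exact Finset.eq_of_subset_of_card_le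
    ((Finset.subset_insert_iff_of_notMem fun h => ha (hu h)).1 huv') (by omega)

end Commutation

section ExchangeSystem

variable {α G : Type*} [LinearOrder α] [Monoid G]

namespace CommuteUnlessFacet

variable {A : Finset α} {a : α} {m : ℕ} {X Y : Finset α → G}

theorem prod_map_mul_insert (ha : a ∉ A) (h : CommuteUnlessFacet (insert a A) (m + 1) X Y) :
    ((lexSubsets A (m + 1)).map fun u => X u * Y (insert a u)).prod =
      ((lexSubsets A (m + 1)).map X).prod *
        ((lexSubsets A (m + 1)).map fun u => Y (insert a u)).prod := by
  refine List.prod_map_mul_of_pairwise_commute <| (nodup_lexSubsets A (m + 1)).imp_of_mem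
    fun hu hv huv => ?_
  obtain ⟨huA, hum⟩ := mem_lexSubsets.1 hu
  obtain ⟨hvA, hvm⟩ := mem_lexSubsets.1 hv
  exact (h.commute_insert_of_ne ha hvA huA hvm hum huv.symm).symm

theorem prod_map_insert_mul (ha : a ∉ A) (h : CommuteUnlessFacet (insert a A) (m + 1) X Y) :
    ((lexSubsets A (m + 1)).map fun u => Y (insert a u) * X u).prod =
      ((lexSubsets A (m + 1)).map fun u => Y (insert a u)).prod *
        ((lexSubsets A (m + 1)).map X).prod := by
  refine List.prod_map_mul_of_pairwise_commute <| (nodup_lexSubsets A (m + 1)).imp_of_mem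
    fun hu hv huv => ?_
  obtain ⟨huA, hum⟩ := mem_lexSubsets.1 hu
  obtain ⟨hvA, hvm⟩ := mem_lexSubsets.1 hv
  exact h.commute_insert_of_ne ha huA hvA hum hvm huv

theorem commute_prod_insert (ha : a ∉ A) (h : CommuteUnlessFacet (insert a A) (m + 1) X Y)
    {l l' : List (Finset α)} (hl : ∀ t ∈ l, t ⊆ A ∧ t.card = m)
    (hl' : ∀ u ∈ l', u ⊆ A ∧ u.card = m + 2) :
    Commute (l.map fun t => X (insert a t)).prod (l'.map Y).prod := by
  refine Commute.list_prod_left _ _ fun x hx => Commute.list_prod_right _ _ fun y hy => ?_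
  obtain ⟨t, ht, rfl⟩ := List.mem_map.1 hx
  obtain ⟨u, hu, rfl⟩ := List.mem_map.1 hy
  obtain ⟨htA, htm⟩ := hl t ht
  obtain ⟨huA, hum⟩ := hl' u hu
  refine h _ _ (Finset.insert_subset_insert a htA) (huA.trans (Finset.subset_insert a A))
    (by rw [Finset.card_insert_of_notMem (fun h => ha (htA h)), htm]) hum
    fun htu => ha (huA (htu (Finset.mem_insert_self a t)))

end CommuteUnlessFacet

structure IsExchangeSystem (A : Finset α) (m : ℕ) (X P Q : Finset α → G) : Prop where
  adjacent_X : CommuteUnlessAdjacent A m X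
  adjacent_P : CommuteUnlessAdjacent A (m + 1) P
  adjacent_Q : CommuteUnlessAdjacent A (m + 1) Q
  facet_P : CommuteUnlessFacet A m X P
  facet_Q : CommuteUnlessFacet A m X Q
  exchange : ∀ w ⊆ A, w.card = m + 1 →
    ((lexSubsets w m).map X).prod * P w = Q w * ((lexSubsets w m).reverse.map X).prod

namespace IsExchangeSystem

variable {A B : Finset α} {a : α} {m : ℕ} {X P Q : Finset α → G}

theorem mono (h : IsExchangeSystem B m X P Q) (hAB : A ⊆ B) : IsExchangeSystem A m X P Q where
  adjacent_X := h.adjacent_X.mono hAB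
  adjacent_P := h.adjacent_P.mono hAB
  adjacent_Q := h.adjacent_Q.mono hAB
  facet_P := h.facet_P.mono hAB
  facet_Q := h.facet_Q.mono hAB
  exchange w hw := h.exchange w (hw.trans hAB)

theorem link (ha : ∀ b ∈ A, a < b) (h : IsExchangeSystem (insert a A) (m + 1) X P Q) :
    IsExchangeSystem A m (fun t => X (insert a t)) (fun u => X u * P (insert a u))
      (fun u => Q (insert a u) * X u) := by
  have haA : a ∉ A := fun h => lt_irrefl a (ha a h)
  have hX := h.adjacent_X.mono (Finset.subset_insert a A)
  refine ⟨h.adjacent_X.comp_insert haA, hX.mul (h.adjacent_P.comp_insert haA) ?_,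
    (h.adjacent_Q.comp_insert haA).mul hX ?_,
    (h.adjacent_X.commuteUnlessFacet_insert haA).mul (h.facet_P.comp_insert haA),
    (h.facet_Q.comp_insert haA).mul (h.adjacent_X.commuteUnlessFacet_insert haA), ?_⟩
  · exact fun u v hu hv hum hvm huv => h.facet_P.commute_insert_of_ne haA hu hv hum hvm huv
  · exact fun u v hu hv hum hvm huv =>
      (h.facet_Q.commute_insert_of_ne haA hv hu hvm hum huv.symm).symm
  · intro w hw hwm
    have hpacket := h.exchange (insert a w) (Finset.insert_subset_insert a hw)
      (by rw [Finset.card_insert_of_notMem (fun h => haA (hw h)), hwm])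
    rw [lexSubsets_insert_succ (fun b hb => ha b (hw hb)), ← hwm, lexSubsets_card] at hpacket
    simpa [List.map_reverse, mul_assoc, Function.comp_def] using hpacket

theorem prod_lexSubsets_exchange (h : IsExchangeSystem A m X P Q) :
    ((lexSubsets A m).map X).prod * ((lexSubsets A (m + 1)).map P).prod =
      ((lexSubsets A (m + 1)).map Q).prod * ((lexSubsets A m).reverse.map X).prod := by
  induction A using Finset.induction_on_min generalizing m X P Q with
  | empty => cases m <;> simp
  | insert a A ha ih =>
    have haA : a ∉ A := fun h => lt_irrefl a (ha a h)
    have hA := h.mono (Finset.subset_insert a A)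
    cases m with
    | zero =>
      have hpacket := h.exchange {a} (by simp) (by simp)
      have hrest := ih hA
      simp only [lexSubsets_zero, lexSubsets_insert_succ ha, List.map_append, List.prod_append,
        List.map_cons, List.map_nil, List.prod_cons, List.prod_nil, mul_one, List.reverse_cons,
        List.reverse_nil, List.nil_append, Finset.insert_empty] at hpacket hrest ⊢
      rw [← mul_assoc, hpacket, mul_assoc, hrest, mul_assoc]
    | succ m =>
      have hzip := h.facet_P.prod_map_mul_insert haA
      have hunzip := h.facet_Q.prod_map_insert_mul haA
      have hcomm := h.facet_P.commute_prod_insert haA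
        (l := (lexSubsets A m).reverse) (l' := lexSubsets A (m + 2))
        (fun t ht => mem_lexSubsets.1 (List.mem_reverse.1 ht)) fun u hu => mem_lexSubsets.1 hu
      have hlink := ih (h.link ha)
      have hrest := ih hA
      rw [lexSubsets_insert_succ ha, lexSubsets_insert_succ ha]
      simp only [List.map_append, List.prod_append, List.map_map, List.reverse_append,
        ← List.map_reverse, Function.comp_def]
      calc _ = ((lexSubsets A m).map fun t => X (insert a t)).prod *
              ((lexSubsets A (m + 1)).map fun u => X u * P (insert a u)).prod *
              ((lexSubsets A (m + 2)).map P).prod := by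
            rw [hzip]; simp only [mul_assoc]
        _ = ((lexSubsets A (m + 1)).map fun u => Q (insert a u) * X u).prod *
              (((lexSubsets A m).reverse.map fun t => X (insert a t)).prod *
              ((lexSubsets A (m + 2)).map P).prod) := by
            rw [hlink, mul_assoc]
        _ = ((lexSubsets A (m + 1)).map fun u => Q (insert a u)).prod *
              (((lexSubsets A (m + 1)).map X).prod * ((lexSubsets A (m + 2)).map P).prod) *
              ((lexSubsets A m).reverse.map fun t => X (insert a t)).prod := by
            rw [hcomm.eq, hunzip]; simp only [mul_assoc]
        _ = _ := by
            rw [hrest]; simp only [mul_assoc]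

end IsExchangeSystem

end ExchangeSystem

theorem word_eq_reverse_word_Bn_general {G : Type*} [Group G] (n N : ℕ)
    (R : Finset ℕ → G)
    (hcomm : ∀ s t : Finset ℕ, s ⊆ Finset.Icc 1 N → t ⊆ Finset.Icc 1 N →
      s.card = n → t.card = n → (s ∩ t).card ≠ n - 1 → R s * R t = R t * R s)
    (hsimplex : ∀ u : Finset ℕ, u ⊆ Finset.Icc 1 N → u.card = n + 1 →
      ((u.sort (· ≤ ·)).map fun a => R (u.erase a)).prod =
        ((u.sort (· ≤ ·)).reverse.map fun a => R (u.erase a)).prod)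
    (L : List (Finset ℕ))
    (hL : ∀ s : Finset ℕ, s ∈ L ↔ s ⊆ Finset.Icc 1 N ∧ s.card = n)
    (hsorted : L.Pairwise finsetLex) :
    (L.map R).prod = (L.reverse.map R).prod := by
  have hsystem : IsExchangeSystem (Finset.Icc 1 N) n R 1 1 :=
    { adjacent_X := hcomm
      adjacent_P := fun _ _ _ _ _ _ _ => .one_left 1
      adjacent_Q := fun _ _ _ _ _ _ _ => .one_left 1
      facet_P := fun _ _ _ _ _ _ _ => .one_right _
      facet_Q := fun _ _ _ _ _ _ _ => .one_right _
      exchange := fun u hu hun => by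
        have hrev := congrArg List.reverse (reverse_lexSubsets hun)
        rw [List.reverse_reverse] at hrev
        simpa [hrev, List.map_reverse, Function.comp_def] using (hsimplex u hu hun).symm }
  simpa [eq_lexSubsets_of_pairwise hL hsorted, Pi.one_def] using hsystem.prod_lexSubsets_exchange

/-- In the group `B(n,N)` (generators indexed by `n`-element subsets of `{1,…,N}`,
commuting unless their index sets share exactly `n-1` elements, and satisfying the
`n`-simplex relations), the lexicographically ordered product `W(n,N)` of all
generators equals the same product taken in the reverse order. -/
theorem word_eq_reverse_word_Bn {G : Type*} [Group G] (n N : ℕ) (hn : 1 ≤ n) (hnN : n ≤ N)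
    (R : Finset ℕ → G)
    (hcomm : ∀ s t : Finset ℕ, s ⊆ Finset.Icc 1 N → t ⊆ Finset.Icc 1 N →
      s.card = n → t.card = n → (s ∩ t).card ≠ n - 1 → R s * R t = R t * R s)
    (hsimplex : ∀ u : Finset ℕ, u ⊆ Finset.Icc 1 N → u.card = n + 1 →
      ((u.sort (· ≤ ·)).map fun a => R (u.erase a)).prod =
        ((u.sort (· ≤ ·)).reverse.map fun a => R (u.erase a)).prod)
    (L : List (Finset ℕ))
    (hL : ∀ s : Finset ℕ, s ∈ L ↔ s ⊆ Finset.Icc 1 N ∧ s.card = n)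
    (hnodup : L.Nodup) (hsorted : L.Pairwise finsetLex) :
    (L.map R).prod = (L.reverse.map R).prod :=
  word_eq_reverse_word_Bn_general n N R hcomm hsimplex L hL hsorted
end

section
/- In the group B(n,N), the lexicographically ordered product W(n,N) of all generators equals the colexicographically ordered product W'(n,N) of all generators, and moreover the equality can be established using only the commutativity relations (two generators commute when their index sets do not intersect in exactly n−1 elements). -/
def finsetColex (s t : Finset ℕ) : Prop :=
  List.Lex (· < ·) ((s.sort (· ≤ ·)).reverse) ((t.sort (· ≤ ·)).reverse)

namespace Finset

variable {α : Type*} [LinearOrder α]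

theorem sort_insert_of_forall_lt {s : Finset α} {a : α} (h : ∀ x ∈ s, a < x) :
    (insert a s).sort = a :: s.sort :=
  sort_insert _ (fun x hx => (h x hx).le) fun ha => lt_irrefl a (h a ha)

theorem sort_ge_eq_reverse (s : Finset α) : s.sort (· ≥ ·) = (s.sort).reverse :=
  (sortedGT_sort s).eq_reverse_of_mem_iff_of_sortedLT (by simp) (sortedLT_sort s)

theorem exists_sort_insert_eq_append {X : Finset α} {a b : α} (hab : a < b) (ha : a ∉ X)
    (hb : b ∉ X) : ∃ p q q' c, a < c ∧ (insert a X).sort = p ++ a :: q ∧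
      (insert b X).sort = p ++ c :: q' := by
  induction X using Finset.induction_on_min with
  | empty => exact ⟨[], [], [], b, hab, by simp, by simp⟩
  | insert m Y hmY ih =>
    have below : ∀ x < m, ∀ y ∈ insert m Y, x < y := fun x hx y hy => by
      rcases mem_insert.mp hy with rfl | hy
      exacts [hx, hx.trans (hmY y hy)]
    have above : ∀ x, m < x → ∀ y ∈ insert x Y, m < y := fun x hx y hy => by
      rcases mem_insert.mp hy with rfl | hy
      exacts [hx, hmY y hy]
    have hma : m ≠ a := by rintro rfl; simp at ha
    have hmb : m ≠ b := by rintro rfl; simp at hb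
    rcases hma.lt_or_gt with hma | ham
    · obtain ⟨p, q, q', c, hac, hpa, hpb⟩ := ih (fun h => ha (mem_insert_of_mem h))
        (fun h => hb (mem_insert_of_mem h))
      refine ⟨m :: p, q, q', c, hac, ?_, ?_⟩
      · rw [insert_comm, sort_insert_of_forall_lt (above a hma), hpa, List.cons_append]
      · rw [insert_comm, sort_insert_of_forall_lt (above b (hma.trans hab)), hpb,
          List.cons_append]
    have hpa := sort_insert_of_forall_lt (below a ham)
    rcases hmb.lt_or_gt with hmb | hbm
    · refine ⟨[], _, (insert b Y).sort, m, ham, hpa, ?_⟩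
      rw [insert_comm, sort_insert_of_forall_lt (above b hmb), List.nil_append]
    · exact ⟨[], _, _, b, hab, hpa, sort_insert_of_forall_lt (below b hbm)⟩

end Finset

theorem finsetLex_insert {X : Finset ℕ} {a b : ℕ} (hab : a < b) (ha : a ∉ X) (hb : b ∉ X) :
    finsetLex (insert a X) (insert b X) := by
  obtain ⟨p, q, q', c, hac, hpa, hpb⟩ := Finset.exists_sort_insert_eq_append hab ha hb
  rw [finsetLex, hpa, hpb]
  exact List.Lex.append_left _ (List.Lex.rel hac) p

theorem finsetColex_insert {X : Finset ℕ} {a b : ℕ} (hab : a < b) (ha : a ∉ X) (hb : b ∉ X) :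
    finsetColex (insert a X) (insert b X) := by
  -- the lex statement read in `ℕᵒᵈ`, whose increasing enumeration is `sort (· ≥ ·)`
  obtain ⟨p, q, q', c, hcb, hpb, hpa⟩ : ∃ (p q q' : List ℕ) (c : ℕ), c < b ∧
      (insert b X).sort (· ≥ ·) = p ++ b :: q ∧ (insert a X).sort (· ≥ ·) = p ++ c :: q' :=
    Finset.exists_sort_insert_eq_append (α := ℕᵒᵈ) hab hb ha
  rw [finsetColex, ← Finset.sort_ge_eq_reverse, ← Finset.sort_ge_eq_reverse, hpa, hpb]
  exact .append_left _ (.rel hcb) p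

theorem Finset.eq_insert_inter_of_sdiff_eq_singleton {α : Type*} [DecidableEq α]
    {s t : Finset α} {a : α} (h : s \ t = {a}) : s = insert a (s ∩ t) := by
  rw [Finset.insert_eq, ← h, Finset.sdiff_union_inter]

theorem finsetColex_of_finsetLex {s t : Finset ℕ} (hst : (s \ t).card = 1)
    (hts : (t \ s).card = 1) (h : finsetLex s t) : finsetColex s t := by
  obtain ⟨a, ha⟩ := Finset.card_eq_one.mp hst
  obtain ⟨b, hb⟩ := Finset.card_eq_one.mp hts
  have haX : a ∉ s ∩ t := fun hat =>
    (Finset.mem_sdiff.mp (ha ▸ Finset.mem_singleton_self a)).2 (Finset.mem_inter.mp hat).2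
  have hbX : b ∉ s ∩ t := fun hbs =>
    (Finset.mem_sdiff.mp (hb ▸ Finset.mem_singleton_self b)).2 (Finset.mem_inter.mp hbs).1
  have hs := Finset.eq_insert_inter_of_sdiff_eq_singleton ha
  have ht := Finset.eq_insert_inter_of_sdiff_eq_singleton hb
  rw [Finset.inter_comm t s] at ht
  generalize s ∩ t = X at haX hbX hs ht
  subst hs ht
  rcases lt_trichotomy a b with hab | rfl | hba
  · exact finsetColex_insert hab haX hbX
  · exact absurd h (irrefl (r := List.Lex (· < ·)) _)
  · exact absurd (finsetLex_insert hba hbX haX) (asymm (r := List.Lex (· < ·)) h)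

/-- Pull the head of `l` to the front of `l'`: every element it passes is ordered oppositely
by `r` and `r'`, so commutes with it. -/
theorem List.Perm.prod_map_eq_of_commute {α M : Type*} [Monoid M] {f : α → M}
    {r r' : α → α → Prop} {l l' : List α} (hp : l.Perm l') (hl : l.Pairwise r)
    (hl' : l'.Pairwise r') (hc : ∀ x ∈ l, ∀ y ∈ l, r x y → r' y x → Commute (f x) (f y)) :
    (l.map f).prod = (l'.map f).prod := by
  induction l generalizing l' with
  | nil => rw [← hp.nil_eq]
  | cons m l ih =>
    obtain ⟨P, Q, rfl⟩ := List.append_of_mem (hp.subset List.mem_cons_self)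
    have hmP : Commute (f m) ((P.map f).prod) := by
      refine Commute.list_prod_right _ _ fun _ hx => ?_
      obtain ⟨y, hy, rfl⟩ := List.mem_map.mp hx
      obtain rfl | hyl := List.mem_cons.mp (hp.symm.subset (List.mem_append_left _ hy))
      · exact Commute.refl _
      exact hc m List.mem_cons_self y (List.mem_cons_of_mem _ hyl)
        ((List.pairwise_cons.mp hl).1 y hyl)
        ((List.pairwise_append.mp hl').2.2 y hy m List.mem_cons_self)
    have hsub : (P ++ Q).Sublist (P ++ m :: Q) := (List.sublist_cons_self m Q).append_left P
    rw [List.map_cons, List.prod_cons,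
      ih ((List.perm_cons m).mp (hp.trans List.perm_middle)) (List.pairwise_cons.mp hl).2
        (hl'.sublist hsub) fun x hx y hy => hc x (List.mem_cons_of_mem _ hx) y
          (List.mem_cons_of_mem _ hy)]
    simp only [List.map_append, List.map_cons, List.prod_append, List.prod_cons]
    rw [← mul_assoc, hmP.eq, mul_assoc]

theorem word_lex_eq_word_colex_general {G : Type*} [Group G] (n N : ℕ) (hn : 1 ≤ n)
    (R : Finset ℕ → G)
    (hcomm : ∀ s t : Finset ℕ, s ⊆ Finset.Icc 1 N → t ⊆ Finset.Icc 1 N →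
      s.card = n → t.card = n → (s ∩ t).card ≠ n - 1 → R s * R t = R t * R s)
    (L L' : List (Finset ℕ))
    (hL : ∀ s : Finset ℕ, s ∈ L ↔ s ⊆ Finset.Icc 1 N ∧ s.card = n)
    (hL' : ∀ s : Finset ℕ, s ∈ L' ↔ s ⊆ Finset.Icc 1 N ∧ s.card = n)
    (hsorted : L.Pairwise finsetLex) (hsorted' : L'.Pairwise finsetColex)
    (hnodup : L.Nodup) (hnodup' : L'.Nodup) :
    (L.map R).prod = (L'.map R).prod := by
  have hperm : L.Perm L' := (List.perm_ext_iff_of_nodup hnodup hnodup').mpr fun s => by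
    rw [hL, hL']
  refine hperm.prod_map_eq_of_commute hsorted hsorted' fun s hs t ht hlex hcolex => ?_
  obtain ⟨hsN, hsn⟩ := (hL s).mp hs
  obtain ⟨htN, htn⟩ := (hL t).mp ht
  refine hcomm s t hsN htN hsn htn fun hinter => ?_
  have hcard_s := Finset.card_inter_add_card_sdiff s t
  have hcard_t := Finset.card_inter_add_card_sdiff t s
  rw [Finset.inter_comm] at hcard_t
  exact asymm (r := List.Lex (· < ·))
    (finsetColex_of_finsetLex (by omega) (by omega) hlex) hcolex

/-- In `B(n,N)`, the lexicographically ordered product `W(n,N)` of all generators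
equals the colexicographically ordered product `W'(n,N)`; moreover this holds using
only the commutativity relations (two generators commute when their index sets do not
intersect in exactly `n-1` elements): the equality holds in any group whose elements
satisfy just those commutation relations. -/
theorem word_lex_eq_word_colex {G : Type*} [Group G] (n N : ℕ) (hn : 1 ≤ n) (hnN : n ≤ N)
    (R : Finset ℕ → G)
    (hcomm : ∀ s t : Finset ℕ, s ⊆ Finset.Icc 1 N → t ⊆ Finset.Icc 1 N →
      s.card = n → t.card = n → (s ∩ t).card ≠ n - 1 → R s * R t = R t * R s)
    (L L' : List (Finset ℕ))
    (hL : ∀ s : Finset ℕ, s ∈ L ↔ s ⊆ Finset.Icc 1 N ∧ s.card = n)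
    (hL' : ∀ s : Finset ℕ, s ∈ L' ↔ s ⊆ Finset.Icc 1 N ∧ s.card = n)
    (hsorted : L.Pairwise finsetLex) (hsorted' : L'.Pairwise finsetColex)
    (hnodup : L.Nodup) (hnodup' : L'.Nodup) :
    (L.map R).prod = (L'.map R).prod :=
  word_lex_eq_word_colex_general n N hn R hcomm L L' hL hL' hsorted hsorted' hnodup hnodup'
end

section
/- In the group B(n,N), the recursive factorization W(n,N) · ⌊W(n−1,N)⌋_{N+1} = W(n,N+1) holds in B(n,N+1), where ⌊·⌋_{N+1} replaces each generator R_{a1,...,a(n−1)} of B(n−1,N) by R_{a1,...,a(n−1),N+1}. -/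
/-!
Split the `n`-subsets of `{1,…,N+1}` by whether they contain `N+1`: the word `W(n,N+1)` is then a
shuffle of `W(n,N)` and `⌊W(n-1,N)⌋_{N+1}`, each kept in its lexicographic order. Sorting the
concatenation `W(n,N) · ⌊W(n-1,N)⌋_{N+1}` into `W(n,N+1)` only swaps pairs `s`, `t ∪ {N+1}` with
`t ∪ {N+1}` lexicographically before `s`. Such a pair never shares `n-1` indices: otherwise
`s = t ∪ {w}` with `w ≤ N`, which puts `s` first. So every swap is a commutativity relation.
-/

namespace List

variable {α M : Type*}

theorem prod_map_eq_of_perm_of_pairwise [Monoid M] {f : α → M} {r : α → α → Prop}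
    {l₁ l₂ : List α} (hp : l₁ ~ l₂) (h₂ : l₂.Pairwise r)
    (h₁ : l₁.Pairwise fun x y => r y x → Commute (f x) (f y)) :
    (l₁.map f).prod = (l₂.map f).prod := by
  induction l₁ generalizing l₂ with
  | nil => rw [hp.nil_eq]
  | cons a l ih =>
    obtain ⟨u, v, rfl, hau⟩ := eq_append_cons_of_mem (hp.subset mem_cons_self)
    have hl : l ~ u ++ v := (hp.trans perm_middle).cons_inv
    have hcomm : Commute (f a) (u.map f).prod := by
      refine Commute.list_prod_right _ _ fun _ hfb => ?_
      obtain ⟨b, hb, rfl⟩ := mem_map.1 hfb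
      have hba : r b a := (pairwise_append.1 h₂).2.2 b hb a mem_cons_self
      have hbl : b ∈ l := (mem_cons.1 (hp.symm.subset (mem_append_left _ hb))).resolve_left
        fun h => hau (h ▸ hb)
      exact (pairwise_cons.1 h₁).1 b hbl hba
    have hrest :=
      ih hl (h₂.sublist ((Sublist.refl u).append (sublist_cons_self a v))) h₁.of_cons
    simp only [map_cons, prod_cons, map_append, prod_append] at hrest ⊢
    rw [hrest, ← mul_assoc, hcomm.eq, mul_assoc]

theorem Lex.append_of_length_eq {r : α → α → Prop} {l₁ l₂ : List α} (h : Lex r l₁ l₂)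
    (hlen : l₁.length = l₂.length) (m₁ m₂ : List α) : Lex r (l₁ ++ m₁) (l₂ ++ m₂) := by
  induction h with
  | nil => simp at hlen
  | rel h => exact .rel h
  | cons _ ih => exact .cons (ih (by simpa using hlen))

variable [LinearOrder α]

theorem orderedInsert_eq_concat {a : α} {l : List α} (h : ∀ b ∈ l, b < a) :
    l.orderedInsert (· ≤ ·) a = l ++ [a] := by
  induction l with
  | nil => rfl
  | cons b l ih =>
    simp only [mem_cons, forall_eq_or_imp] at h
    rw [orderedInsert_cons, if_neg (not_le.2 h.1), ih h.2, cons_append]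

theorem lex_orderedInsert_concat {a c : α} {l : List α} (ha : a ∉ l) (hac : a < c)
    (hl : ∀ b ∈ l, b < c) : Lex (· < ·) (l.orderedInsert (· ≤ ·) a) (l ++ [c]) := by
  induction l with
  | nil => exact .rel hac
  | cons b l ih =>
    simp only [mem_cons, not_or, forall_eq_or_imp] at ha hl
    by_cases hab : a ≤ b
    · rw [orderedInsert_cons, if_pos hab]
      exact .rel (lt_of_le_of_ne hab ha.1)
    · rw [orderedInsert_cons, if_neg hab]
      exact .cons (ih ha.2 hl.2)

end List

namespace Finset

variable {α : Type*}

theorem nodup_append_map_insert [DecidableEq α] {a : α} {l₁ l₂ : List (Finset α)}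
    (h₁ : l₁.Nodup) (h₂ : l₂.Nodup) (ha₁ : ∀ s ∈ l₁, a ∉ s) (ha₂ : ∀ s ∈ l₂, a ∉ s) :
    (l₁ ++ l₂.map (insert a)).Nodup := by
  refine List.nodup_append.2 ⟨h₁, h₂.map_on fun s hs t ht hst => ?_, ?_⟩
  · simpa [erase_insert (ha₂ s hs), erase_insert (ha₂ t ht)] using congrArg (erase · a) hst
  · rintro _ hs _ ht rfl
    obtain ⟨t, -, rfl⟩ := List.mem_map.1 ht
    exact ha₁ _ hs (mem_insert_self a t)

variable [LinearOrder α]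

theorem sort_insert_eq_orderedInsert {a : α} {s : Finset α} (ha : a ∉ s) :
    (insert a s).sort = s.sort.orderedInsert (· ≤ ·) a := by
  refine List.Perm.eq_of_sortedLE (sortedLT_sort _).sortedLE ?_ ?_
  · exact ((sortedLT_sort s).sortedLE.pairwise.orderedInsert a _).sortedLE
  · exact ((sort_perm_toList _ _).trans (toList_insert ha)).trans
      ((sort_perm_toList s _).symm.cons a |>.trans (List.perm_orderedInsert _ a _).symm)

theorem subset_Icc_succ_and_card_succ_iff {N n : ℕ} {s : Finset ℕ} :
    s ⊆ Icc 1 (N + 1) ∧ s.card = n + 1 ↔ (s ⊆ Icc 1 N ∧ s.card = n + 1) ∨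
      ∃ t, (t ⊆ Icc 1 N ∧ t.card = n) ∧ insert (N + 1) t = s := by
  simp only [← mem_powersetCard]
  rw [← Order.succ_eq_add_one N, ← insert_Icc_right_eq_Icc_succ (by simp),
    powersetCard_succ_insert (by simp)]
  simp
end Finset

theorem finsetLex_asymm {s t : Finset ℕ} (h : finsetLex s t) : ¬ finsetLex t s :=
  List.lex_asymm (fun h' => lt_asymm h') h

theorem finsetLex.insert_of_forall_lt {c : ℕ} {s t : Finset ℕ} (h : finsetLex s t)
    (hcard : s.card = t.card) (hs : ∀ a ∈ s, a < c) (ht : ∀ a ∈ t, a < c) :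
    finsetLex (insert c s) (insert c t) := by
  unfold finsetLex at h ⊢
  rw [Finset.sort_insert_eq_orderedInsert fun hc => (hs c hc).false,
    Finset.sort_insert_eq_orderedInsert fun hc => (ht c hc).false,
    List.orderedInsert_eq_concat (by simpa), List.orderedInsert_eq_concat (by simpa)]
  exact h.append_of_length_eq (by simp [hcard]) _ _

theorem finsetLex_insert_insert_of_lt {w c : ℕ} {t : Finset ℕ} (hw : w ∉ t) (hwc : w < c)
    (ht : ∀ a ∈ t, a < c) : finsetLex (insert w t) (insert c t) := by
  unfold finsetLex
  rw [Finset.sort_insert_eq_orderedInsert hw,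
    Finset.sort_insert_eq_orderedInsert fun hc => (ht c hc).false,
    List.orderedInsert_eq_concat (a := c) (by simpa using ht)]
  exact List.lex_orderedInsert_concat (by simpa using hw) hwc (by simpa using ht)

theorem finsetLex_insert_of_card_inter_insert {c : ℕ} {s t : Finset ℕ} (hs : ∀ a ∈ s, a < c)
    (ht : ∀ a ∈ t, a < c) (hcard : s.card = t.card + 1)
    (hinter : (s ∩ insert c t).card = t.card) :
    finsetLex s (insert c t) := by
  rw [Finset.inter_insert_of_notMem fun hc => (hs c hc).false] at hinter
  have hts : t ⊆ s := Finset.inter_eq_right.1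
    (Finset.eq_of_subset_of_card_le Finset.inter_subset_right hinter.ge)
  obtain ⟨w, hw, rfl⟩ := Finset.exists_eq_insert_iff.2 ⟨hts, hcard.symm⟩
  exact finsetLex_insert_insert_of_lt hw (hs w (Finset.mem_insert_self w t)) ht

theorem word_recursion_general {G : Type*} [Group G] (n N : ℕ) (hn : 1 ≤ n)
    (R : Finset ℕ → G)
    (hcomm : ∀ s t : Finset ℕ, s ⊆ Finset.Icc 1 (N + 1) → t ⊆ Finset.Icc 1 (N + 1) →
      s.card = n → t.card = n → (s ∩ t).card ≠ n - 1 → R s * R t = R t * R s)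
    (L1 L2 L3 : List (Finset ℕ))
    (hL1 : ∀ s : Finset ℕ, s ∈ L1 ↔ s ⊆ Finset.Icc 1 N ∧ s.card = n)
    (hL2 : ∀ s : Finset ℕ, s ∈ L2 ↔ s ⊆ Finset.Icc 1 N ∧ s.card = n - 1)
    (hL3 : ∀ s : Finset ℕ, s ∈ L3 ↔ s ⊆ Finset.Icc 1 (N + 1) ∧ s.card = n)
    (h1 : L1.Pairwise finsetLex) (h2 : L2.Pairwise finsetLex) (h3 : L3.Pairwise finsetLex)
    (hd1 : L1.Nodup) (hd2 : L2.Nodup) (hd3 : L3.Nodup) :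
    (L1.map R).prod * (L2.map fun s => R (insert (N + 1) s)).prod = (L3.map R).prod := by
  obtain ⟨m, rfl⟩ := Nat.exists_eq_add_of_le' hn
  have hlt {s : Finset ℕ} (hs : s ⊆ Finset.Icc 1 N) : ∀ a ∈ s, a < N + 1 :=
    fun a ha => Nat.lt_succ_of_le (Finset.mem_Icc.1 (hs ha)).2
  have hnotMem {s : Finset ℕ} (hs : s ⊆ Finset.Icc 1 N) : N + 1 ∉ s :=
    fun h => (hlt hs _ h).false
  have hperm : (L1 ++ L2.map (insert (N + 1))).Perm L3 := by
    refine (List.perm_ext_iff_of_nodup ?_ hd3).2 fun s => ?_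
    · exact Finset.nodup_append_map_insert hd1 hd2 (fun s hs => hnotMem ((hL1 s).1 hs).1)
        fun s hs => hnotMem ((hL2 s).1 hs).1
    · simp [hL1, hL2, hL3, Finset.subset_Icc_succ_and_card_succ_iff]
  have hinv : (L1 ++ L2.map (insert (N + 1))).Pairwise
      fun x y => finsetLex y x → Commute (R x) (R y) := by
    refine List.pairwise_append.2 ⟨h1.imp fun hxy hyx => (finsetLex_asymm hxy hyx).elim, ?_, ?_⟩
    · rw [List.pairwise_map]
      refine h2.imp_of_mem fun hs ht hst hts => (finsetLex_asymm ?_ hts).elim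
      obtain ⟨hs, hscard⟩ := (hL2 _).1 hs
      obtain ⟨ht, htcard⟩ := (hL2 _).1 ht
      exact hst.insert_of_forall_lt (hscard.trans htcard.symm) (hlt hs) (hlt ht)
    · rintro x hx _ hy hyx
      obtain ⟨t, ht, rfl⟩ := List.mem_map.1 hy
      obtain ⟨hxsub, hxcard⟩ := (hL1 x).1 hx
      obtain ⟨htsub, htcard⟩ := (hL2 t).1 ht
      obtain ⟨hysub, hycard⟩ := (hL3 _).1 (hperm.subset (List.mem_append_right _ hy))
      refine hcomm x _ (hxsub.trans (Finset.Icc_subset_Icc_right N.le_succ)) hysub hxcard hycard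
        fun hinter => finsetLex_asymm ?_ hyx
      exact finsetLex_insert_of_card_inter_insert (hlt hxsub) (hlt htsub) (by simp [hxcard, htcard])
        (by simpa [htcard] using hinter)
  simpa [List.prod_append, Function.comp_def] using
    List.prod_map_eq_of_perm_of_pairwise hperm h3 hinv

/-- The recursive factorization `W(n,N) · ⌊W(n-1,N)⌋_{N+1} = W(n,N+1)` in `B(n,N+1)`:
here `R` satisfies the commutativity and `n`-simplex relations of `B(n,N+1)`, `L1` is
the lex-ordered list of `n`-subsets of `{1,…,N}`, `L2` the lex-ordered list of
`(n-1)`-subsets of `{1,…,N}` (each generator getting the extra index `N+1`), and `L3`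
the lex-ordered list of `n`-subsets of `{1,…,N+1}`. -/
theorem word_recursion {G : Type*} [Group G] (n N : ℕ) (hn : 1 ≤ n) (hnN : n ≤ N)
    (R : Finset ℕ → G)
    (hcomm : ∀ s t : Finset ℕ, s ⊆ Finset.Icc 1 (N + 1) → t ⊆ Finset.Icc 1 (N + 1) →
      s.card = n → t.card = n → (s ∩ t).card ≠ n - 1 → R s * R t = R t * R s)
    (hsimplex : ∀ u : Finset ℕ, u ⊆ Finset.Icc 1 (N + 1) → u.card = n + 1 →
      ((u.sort (· ≤ ·)).map fun a => R (u.erase a)).prod =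
        ((u.sort (· ≤ ·)).reverse.map fun a => R (u.erase a)).prod)
    (L1 L2 L3 : List (Finset ℕ))
    (hL1 : ∀ s : Finset ℕ, s ∈ L1 ↔ s ⊆ Finset.Icc 1 N ∧ s.card = n)
    (hL2 : ∀ s : Finset ℕ, s ∈ L2 ↔ s ⊆ Finset.Icc 1 N ∧ s.card = n - 1)
    (hL3 : ∀ s : Finset ℕ, s ∈ L3 ↔ s ⊆ Finset.Icc 1 (N + 1) ∧ s.card = n)
    (h1 : L1.Pairwise finsetLex) (h2 : L2.Pairwise finsetLex) (h3 : L3.Pairwise finsetLex)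
    (hd1 : L1.Nodup) (hd2 : L2.Nodup) (hd3 : L3.Nodup) :
    (L1.map R).prod * (L2.map fun s => R (insert (N + 1) s)).prod = (L3.map R).prod :=
  word_recursion_general n N hn R hcomm L1 L2 L3 hL1 hL2 hL3 h1 h2 h3 hd1 hd2 hd3
end

section
/- Let B be the incidence matrix of the triangular quiver Q_N, viewed as a skew-symmetric integer matrix indexed by vertices (i,j), 1 ≤ i < j ≤ N. If α ∈ ℤ^{N(N−1)/2} satisfies Bα = 0, then the weights of α are invariant under the rotation and reflection symmetries of the quiver: α_{ij} = α_{j−i,N+1−i} = α_{j−i,j} = α_{N+1−j,N+1−i} = α_{i,N+1+i−j} for all 1 ≤ i < j ≤ N. -/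
/-!
Extend `α` by zero off the vertex set. The kernel equations then say that the diagonal
differences `ᾱ(i,m) - ᾱ(i-1,m-1)` have vanishing mixed second differences, so they are determined
by the first row: `ᾱ(i,m) - ᾱ(i-1,m-1) = ᾱ(1,m) - ᾱ(1,i)`. Summing along the diagonal gives
`ᾱ(i,m) = C(m) - C(m-i) - C(i)` for `i ≤ m ≤ N+1`, where `C` is the partial sum of the first row.
Since the row `m = N+1` lies outside the quiver, `C(i) + C(N+1-i) = C(N)`, hence
`α(i,j) = C(N) - C(i) - C(j-i) - C(N+1-j)`, and each symmetry of the quiver merely permutes the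
three parts `i`, `j - i`, `N + 1 - j`.
-/

/-- Entry `B_{v,w}` of the skew-symmetric incidence matrix of the triangular quiver
`Q_N`: edges go `(i,j)→(i,j+1)`, `(i,j)→(i+1,j)` and `(i+1,j+1)→(i,j)`. -/
def Bfun (v w : ℕ × ℕ) : ℤ :=
  if (w = (v.1, v.2 + 1) ∨ w = (v.1 + 1, v.2) ∨ v = (w.1 + 1, w.2 + 1)) then 1
  else if (v = (w.1, w.2 + 1) ∨ v = (w.1 + 1, w.2) ∨ w = (v.1 + 1, v.2 + 1)) then -1
  else 0

/-- The vertex set of the quiver `Q_N`: pairs `(i,j)` with `1 ≤ i < j ≤ N`. -/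
def vertexSet (N : ℕ) : Finset (ℕ × ℕ) :=
  (Finset.Icc 1 N ×ˢ Finset.Icc 1 N).filter fun p => p.1 < p.2

lemma mem_vertexSet {N : ℕ} {p : ℕ × ℕ} :
    p ∈ vertexSet N ↔ 1 ≤ p.1 ∧ p.1 < p.2 ∧ p.2 ≤ N := by
  simp only [vertexSet, Finset.mem_filter, Finset.mem_product, Finset.mem_Icc]
  omega

lemma Bfun_apply {i j : ℕ} (hi : 1 ≤ i) (hj : 1 ≤ j) (w : ℕ × ℕ) :
    Bfun (i, j) w =
      (if w = (i, j + 1) then 1 else 0) + (if w = (i + 1, j) then 1 else 0)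
        + (if w = (i - 1, j - 1) then 1 else 0) - (if w = (i, j - 1) then 1 else 0)
        - (if w = (i - 1, j) then 1 else 0) - (if w = (i + 1, j + 1) then 1 else 0) := by
  obtain ⟨a, b⟩ := w
  simp only [Bfun, Prod.mk.injEq]
  split_ifs <;> omega

lemma sum_Bfun_mul {i j : ℕ} (hi : 1 ≤ i) (hj : 1 ≤ j) (s : Finset (ℕ × ℕ))
    (f : ℕ × ℕ → ℤ) :
    ∑ w ∈ s, Bfun (i, j) w * f w =
      Set.indicator s f (i, j + 1) + Set.indicator s f (i + 1, j)
        + Set.indicator s f (i - 1, j - 1) - Set.indicator s f (i, j - 1)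
        - Set.indicator s f (i - 1, j) - Set.indicator s f (i + 1, j + 1) := by
  simp only [Bfun_apply hi hj, sub_mul, add_mul, ite_mul, one_mul, zero_mul,
    Finset.sum_add_distrib, Finset.sum_sub_distrib, Finset.sum_ite_eq', Set.indicator_apply,
    Finset.mem_coe]

/-- The kernel equation `(Bβ)_{ij} = 0` at the vertex `(i, j)`, for `β` vanishing off the
vertex set. -/
def KernelRelation (N : ℕ) (β : ℕ × ℕ → ℤ) : Prop :=
  ∀ i j, 1 ≤ i → i < j → j ≤ N →
    β (i, j + 1) + β (i + 1, j) + β (i - 1, j - 1) = β (i, j - 1) + β (i - 1, j) + β (i + 1, j + 1)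

lemma kernelRelation_indicator {N : ℕ} {α : ℕ × ℕ → ℤ}
    (hker : ∀ v ∈ vertexSet N, ∑ w ∈ vertexSet N, Bfun v w * α w = 0) :
    KernelRelation N (Set.indicator (vertexSet N) α) := by
  intro i j hi hij hj
  have h := hker (i, j) (mem_vertexSet.2 ⟨hi, hij, hj⟩)
  rw [sum_Bfun_mul hi (by omega)] at h
  linarith

def firstRowSum (β : ℕ × ℕ → ℤ) (k : ℕ) : ℤ :=
  ∑ s ∈ Finset.range (k + 1), β (1, s)

lemma firstRowSum_succ (β : ℕ × ℕ → ℤ) (k : ℕ) :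
    firstRowSum β (k + 1) = firstRowSum β k + β (1, k + 1) :=
  Finset.sum_range_succ _ _

section KernelRelation

variable {N : ℕ} {β : ℕ × ℕ → ℤ}

lemma diagonal_difference_eq (hrel : KernelRelation N β) (hzero : ∀ p ∉ vertexSet N, β p = 0)
    {i m : ℕ} (hi : 1 ≤ i) (him : i ≤ m) (hm : m ≤ N + 1) :
    β (i, m) - β (i - 1, m - 1) = β (1, m) - β (1, i) := by
  induction h : i + m using Nat.strong_induction_on generalizing i m with
  | _ k ih =>
  obtain rfl | hi := hi.eq_or_lt
  · rw [hzero (0, m - 1) (by simp [mem_vertexSet]), hzero (1, 1) (by simp [mem_vertexSet])]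
  obtain rfl | him := him.eq_or_lt
  · rw [hzero (i, i) (by simp [mem_vertexSet]), hzero (i - 1, i - 1) (by simp [mem_vertexSet])]
    ring
  have hr := hrel (i - 1) (m - 1) (by omega) (by omega) (by omega)
  have h₁ := ih (i - 1 + m) (by omega) (by omega) (by omega) hm rfl
  have h₂ := ih (i + (m - 1)) (by omega) (by omega) (by omega) (by omega) rfl
  have h₃ := ih (i - 1 + (m - 1)) (by omega) (by omega) (by omega) (by omega) rfl
  rw [Nat.sub_add_cancel (by omega : 1 ≤ i), Nat.sub_add_cancel (by omega : 1 ≤ m)] at hr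
  simp only [Nat.sub_sub] at hr h₁ h₂ h₃
  linarith

lemma eq_firstRowSum (hrel : KernelRelation N β) (hzero : ∀ p ∉ vertexSet N, β p = 0)
    {i m : ℕ} (him : i ≤ m) (hm : m ≤ N + 1) :
    β (i, m) = firstRowSum β m - firstRowSum β (m - i) - firstRowSum β i := by
  induction i generalizing m with
  | zero =>
    have h₀ : firstRowSum β 0 = 0 := by simp [firstRowSum, hzero (1, 0) (by simp [mem_vertexSet])]
    rw [hzero (0, m) (by simp [mem_vertexSet]), Nat.sub_zero, h₀]
    ring
  | succ i ih =>
    obtain ⟨m, rfl⟩ : ∃ m', m = m' + 1 := ⟨m - 1, by omega⟩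
    have hd := diagonal_difference_eq hrel hzero (i := i + 1) (m := m + 1) (by omega) him hm
    have hprev := ih (m := m) (by omega) (by omega)
    rw [Nat.add_sub_cancel, Nat.add_sub_cancel] at hd
    rw [Nat.add_sub_add_right, firstRowSum_succ, firstRowSum_succ]
    linarith

lemma firstRowSum_add_firstRowSum (hrel : KernelRelation N β)
    (hzero : ∀ p ∉ vertexSet N, β p = 0) {i i' : ℕ} (h : i + i' = N + 1) :
    firstRowSum β i + firstRowSum β i' = firstRowSum β N := by
  obtain rfl : i' = N + 1 - i := by omega
  have hlast := eq_firstRowSum hrel hzero (by omega : i ≤ N + 1) le_rfl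
  rw [hzero (i, N + 1) (by simp [mem_vertexSet]), firstRowSum_succ,
    hzero (1, N + 1) (by simp [mem_vertexSet])] at hlast
  linarith

end KernelRelation

theorem ker_B_symmetric_general (N : ℕ) (α : ℕ × ℕ → ℤ)
    (hker : ∀ v ∈ vertexSet N, ∑ w ∈ vertexSet N, Bfun v w * α w = 0) :
    ∀ i j : ℕ, 1 ≤ i → i < j → j ≤ N →
      α (i, j) = α (j - i, N + 1 - i) ∧
      α (i, j) = α (j - i, j) ∧
      α (i, j) = α (N + 1 - j, N + 1 - i) ∧
      α (i, j) = α (i, N + 1 + i - j) := by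
  set β := Set.indicator (vertexSet N : Set (ℕ × ℕ)) α
  have hrel : KernelRelation N β := kernelRelation_indicator hker
  have hzero : ∀ p ∉ vertexSet N, β p = 0 := fun p hp => Set.indicator_of_notMem hp α
  set S := firstRowSum β
  have hα : ∀ a b c, 1 ≤ a → a < b → b ≤ N → b - a = c → α (a, b) = S b - S c - S a := by
    rintro a b c ha hab hb rfl
    calc α (a, b) = β (a, b) := (Set.indicator_of_mem (mem_vertexSet.2 ⟨ha, hab, hb⟩) α).symm
      _ = S b - S (b - a) - S a := eq_firstRowSum hrel hzero hab.le (by omega)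
  have hS : ∀ a b, a + b = N + 1 → S a + S b = S N := fun a b h =>
    firstRowSum_add_firstRowSum hrel hzero h
  intro i j hi hij hj
  have e₀ := hα i j (j - i) hi hij hj rfl
  have e₁ := hα (j - i) (N + 1 - i) (N + 1 - j) (by omega) (by omega) (by omega) (by omega)
  have e₂ := hα (j - i) j i (by omega) (by omega) hj (by omega)
  have e₃ := hα (N + 1 - j) (N + 1 - i) (j - i) (by omega) (by omega) (by omega) (by omega)
  have e₄ := hα i (N + 1 + i - j) (N + 1 - j) hi (by omega) (by omega) (by omega)
  have c₁ := hS i (N + 1 - i) (by omega)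
  have c₂ := hS j (N + 1 - j) (by omega)
  have c₃ := hS (j - i) (N + 1 + i - j) (by omega)
  exact ⟨by linarith, by linarith, by linarith, by linarith⟩

/-- An integer vector in the kernel of the incidence matrix of `Q_N` is invariant
under the rotation and reflection symmetries of the quiver:
`α_{ij} = α_{j-i,N+1-i} = α_{j-i,j} = α_{N+1-j,N+1-i} = α_{i,N+1+i-j}`. -/
theorem ker_B_symmetric (N : ℕ) (hN : 2 ≤ N) (α : ℕ × ℕ → ℤ)
    (hker : ∀ v ∈ vertexSet N, ∑ w ∈ vertexSet N, Bfun v w * α w = 0) :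
    ∀ i j : ℕ, 1 ≤ i → i < j → j ≤ N →
      α (i, j) = α (j - i, N + 1 - i) ∧
      α (i, j) = α (j - i, j) ∧
      α (i, j) = α (N + 1 - j, N + 1 - i) ∧
      α (i, j) = α (i, N + 1 + i - j) :=
  ker_B_symmetric_general N α hker
end

section
/- The dimension of the kernel of the incidence matrix B of the triangular quiver Q_N (over ℚ) equals N/2 if N is even and (N−1)/2 if N is odd. Equivalently, the center of the quantum torus T_N has dimension χ(N) = ⌊N/2⌋ if N is even and (N−1)/2 if N is odd, i.e., χ(N) = ⌊N/2⌋ for even N and ⌊(N−1)/2⌋ for odd N. -/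
/-- Vertices of `Q_N` as a finite type: pairs `(i,j)` with `1 ≤ i < j ≤ N`. -/
abbrev VIdx (N : ℕ) :=
  {p : Fin (N + 1) × Fin (N + 1) // 1 ≤ p.1.val ∧ p.1.val < p.2.val ∧ p.2.val ≤ N}

/-- The incidence matrix of `Q_N` as a rational matrix. -/
def Bmat (N : ℕ) : Matrix (VIdx N) (VIdx N) ℚ :=
  fun v w => (Bfun (v.val.1.val, v.val.2.val) (w.val.1.val, w.val.2.val) : ℚ)

/-!
Write `x(i,j)` for the weights extended by zero to `ℤ × ℤ`. For any potential `W : ℤ → ℚ`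
the grid `x(i,j) = W j - W i - W (j - i)` satisfies the six-term relation `(B x)_{(i,j)} = 0`
identically, and it vanishes on the three sides `i = 0`, `i = j`, `j = N + 1` of the closed
triangle exactly when `W 0 = 0` and `W k + W (N + 1 - k) = W (N + 1)`; such grids therefore lie
in the kernel. Conversely, for `x` in the kernel the relation says that the diagonal differences
`x(i,j) - x(i-1,j-1)` equal `x(1,j) - x(1,i)`, so `x` is the grid of the partial sums of its
first row, and vanishing on the side `j = N + 1` is the condition on `W`. Grids do not see linear
summands of `W`, so `W` may be taken antisymmetric under `k ↦ N + 1 - k` on `[1, N]`; such a `W`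
is freely determined by its values on `[1, N / 2]`, and the first row of its grid recovers it.
-/

namespace TriangularQuiver

variable {N : ℕ}

def vertex (N : ℕ) (i j : ℤ) (h : 1 ≤ i ∧ i < j ∧ j ≤ N) : VIdx N :=
  ⟨(⟨i.toNat, by omega⟩, ⟨j.toNat, by omega⟩), by simp only; omega⟩

lemma coe_bounds (v : VIdx N) :
    1 ≤ (v.1.1 : ℤ) ∧ (v.1.1 : ℤ) < v.1.2 ∧ (v.1.2 : ℤ) ≤ N := by
  have := v.2; omega

lemma eq_vertex_iff {i j : ℤ} (h : 1 ≤ i ∧ i < j ∧ j ≤ N) (v : VIdx N) :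
    v = vertex N i j h ↔ (v.1.1 : ℤ) = i ∧ (v.1.2 : ℤ) = j := by
  simp only [vertex, Subtype.ext_iff, Prod.ext_iff, Fin.ext_iff]
  omega

lemma coe_vertex {i j : ℤ} (h : 1 ≤ i ∧ i < j ∧ j ≤ N) :
    ((vertex N i j h).1.1 : ℤ) = i ∧ ((vertex N i j h).1.2 : ℤ) = j :=
  (eq_vertex_iff h _).1 rfl

def extend (x : VIdx N → ℚ) (i j : ℤ) : ℚ :=
  if h : 1 ≤ i ∧ i < j ∧ j ≤ N then x (vertex N i j h) else 0

def restrict (f : ℤ → ℤ → ℚ) (v : VIdx N) : ℚ := f v.1.1 v.1.2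

lemma extend_of_not_mem {x : VIdx N → ℚ} {i j : ℤ} (h : ¬(1 ≤ i ∧ i < j ∧ j ≤ N)) :
    extend x i j = 0 := dif_neg h

lemma extend_coe (x : VIdx N → ℚ) (v : VIdx N) : extend x v.1.1 v.1.2 = x v := by
  rw [extend, dif_pos (coe_bounds v), ((eq_vertex_iff _ v).2 ⟨rfl, rfl⟩).symm]

lemma sum_ite_coords_eq_extend (x : VIdx N → ℚ) (i j : ℤ) :
    ∑ w : VIdx N, (if (w.1.1 : ℤ) = i ∧ (w.1.2 : ℤ) = j then x w else 0) = extend x i j := by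
  by_cases h : 1 ≤ i ∧ i < j ∧ j ≤ N
  · simp only [← eq_vertex_iff h, Finset.sum_ite_eq', Finset.mem_univ, if_true, extend,
      dif_pos h]
  · rw [extend_of_not_mem h]
    refine Finset.sum_eq_zero fun w _ => if_neg ?_
    rintro ⟨rfl, rfl⟩
    exact h (coe_bounds w)

def incidenceSum (f : ℤ → ℤ → ℚ) (i j : ℤ) : ℚ :=
  f i (j + 1) + f (i + 1) j + f (i - 1) (j - 1)
    - f i (j - 1) - f (i - 1) j - f (i + 1) (j + 1)

lemma cast_Bfun_eq (i j a b : ℕ) :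
    (Bfun (i, j) (a, b) : ℚ) =
      (if (a : ℤ) = i ∧ (b : ℤ) = j + 1 then 1 else 0)
      + (if (a : ℤ) = i + 1 ∧ (b : ℤ) = j then 1 else 0)
      + (if (a : ℤ) = i - 1 ∧ (b : ℤ) = j - 1 then 1 else 0)
      - (if (a : ℤ) = i ∧ (b : ℤ) = j - 1 then 1 else 0)
      - (if (a : ℤ) = i - 1 ∧ (b : ℤ) = j then 1 else 0)
      - (if (a : ℤ) = i + 1 ∧ (b : ℤ) = j + 1 then 1 else 0) := by
  simp only [Bfun, Prod.mk.injEq]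
  split_ifs <;> (try norm_num) <;> omega

lemma mulVec_Bmat_apply (x : VIdx N → ℚ) (v : VIdx N) :
    (Bmat N).mulVec x v = incidenceSum (extend x) v.1.1 v.1.2 := by
  simp only [Matrix.mulVec, dotProduct, Bmat, cast_Bfun_eq, add_mul, sub_mul, ite_mul, one_mul,
    zero_mul, Finset.sum_add_distrib, Finset.sum_sub_distrib, sum_ite_coords_eq_extend,
    incidenceSum]

lemma mem_ker_Bmat_iff {x : VIdx N → ℚ} :
    x ∈ LinearMap.ker (Bmat N).mulVecLin ↔
      ∀ i j : ℤ, 1 ≤ i → i < j → j ≤ N → incidenceSum (extend x) i j = 0 := by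
  rw [LinearMap.mem_ker, Matrix.mulVecLin_apply, funext_iff]
  refine ⟨fun hx i j hi hij hj => ?_, fun hx v => ?_⟩
  · have hv := hx (vertex N i j ⟨hi, hij, hj⟩)
    rwa [mulVec_Bmat_apply, (coe_vertex _).1, (coe_vertex _).2] at hv
  · obtain ⟨hi, hij, hj⟩ := coe_bounds v
    exact (mulVec_Bmat_apply x v).trans (hx _ _ hi hij hj)

lemma incidenceSum_congr {f g : ℤ → ℤ → ℚ} {i j : ℤ}
    (hi : 1 ≤ i) (hij : i < j) (hj : j ≤ N)
    (hfg : ∀ a b : ℤ, 0 ≤ a → a ≤ b → b ≤ N + 1 → f a b = g a b) :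
    incidenceSum f i j = incidenceSum g i j := by
  unfold incidenceSum
  rw [hfg i (j + 1) (by omega) (by omega) (by omega),
    hfg (i + 1) j (by omega) (by omega) (by omega),
    hfg (i - 1) (j - 1) (by omega) (by omega) (by omega),
    hfg i (j - 1) (by omega) (by omega) (by omega),
    hfg (i - 1) j (by omega) (by omega) (by omega),
    hfg (i + 1) (j + 1) (by omega) (by omega) (by omega)]

lemma extend_restrict_eq {f : ℤ → ℤ → ℚ}
    (hf : ∀ a b : ℤ, 0 ≤ a → a ≤ b → b ≤ N + 1 → (a = 0 ∨ a = b ∨ b = N + 1) →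
      f a b = 0)
    {a b : ℤ} (ha : 0 ≤ a) (hab : a ≤ b) (hb : b ≤ N + 1) :
    extend (restrict f : VIdx N → ℚ) a b = f a b := by
  by_cases h : 1 ≤ a ∧ a < b ∧ b ≤ N
  · rw [extend, dif_pos h, restrict, (coe_vertex h).1, (coe_vertex h).2]
  · rw [extend_of_not_mem h, hf a b ha hab hb (by omega)]

def potentialGrid (W : ℤ → ℚ) (i j : ℤ) : ℚ := W j - W i - W (j - i)

lemma incidenceSum_potentialGrid (W : ℤ → ℚ) (i j : ℤ) :
    incidenceSum (potentialGrid W) i j = 0 := by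
  simp only [incidenceSum, potentialGrid]
  ring_nf

lemma potentialGrid_add_linear (W : ℤ → ℚ) (a : ℚ) :
    potentialGrid (fun k => W k + a * k) = potentialGrid W := by
  funext i j
  simp only [potentialGrid, Int.cast_sub]
  ring

lemma restrict_potentialGrid_mem_ker {W : ℤ → ℚ} (h0 : W 0 = 0)
    (hW : ∀ k : ℤ, 0 ≤ k → k ≤ N + 1 → W k + W (N + 1 - k) = W (N + 1)) :
    (restrict (potentialGrid W) : VIdx N → ℚ) ∈ LinearMap.ker (Bmat N).mulVecLin := by
  have hbdry : ∀ a b : ℤ, 0 ≤ a → a ≤ b → b ≤ N + 1 → (a = 0 ∨ a = b ∨ b = N + 1) →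
      potentialGrid W a b = 0 := by
    rintro a b ha hab hb (rfl | rfl | rfl)
    · simp [potentialGrid, h0]
    · simp [potentialGrid, h0]
    · simp only [potentialGrid]; linarith [hW a ha (by omega)]
  refine mem_ker_Bmat_iff.2 fun i j hi hij hj => ?_
  rw [incidenceSum_congr hi hij hj fun a b ha hab hb => extend_restrict_eq hbdry ha hab hb,
    incidenceSum_potentialGrid]

def diagDiff (f : ℤ → ℤ → ℚ) (i j : ℤ) : ℚ := f i j - f (i - 1) (j - 1)

lemma incidenceSum_eq_diagDiff (f : ℤ → ℤ → ℚ) (i j : ℤ) :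
    incidenceSum f i j =
      diagDiff f i (j + 1) + diagDiff f (i + 1) j
        - diagDiff f (i + 1) (j + 1) - diagDiff f i j := by
  simp only [incidenceSum, diagDiff, add_sub_cancel_right]
  ring

noncomputable def rowPotential (x : VIdx N → ℚ) (k : ℤ) : ℚ :=
  ∑ t ∈ Finset.Icc 1 k, extend x 1 t

lemma rowPotential_zero (x : VIdx N → ℚ) : rowPotential x 0 = 0 := by
  simp [rowPotential]

lemma rowPotential_succ (x : VIdx N → ℚ) {k : ℤ} (hk : 0 ≤ k) :
    rowPotential x (k + 1) = rowPotential x k + extend x 1 (k + 1) := by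
  rw [rowPotential, ← Finset.insert_Icc_right_eq_Icc_add_one (by omega),
    Finset.sum_insert (by simp), rowPotential, add_comm]

section Kernel

variable {x : VIdx N → ℚ} (hx : x ∈ LinearMap.ker (Bmat N).mulVecLin)
include hx

lemma diagDiff_succ_sub {i j : ℤ} (hi : 1 ≤ i) (hij : i + 1 ≤ j) (hj : j ≤ N + 1) :
    diagDiff (extend x) (i + 1) j - diagDiff (extend x) i j =
      -diagDiff (extend x) i (i + 1) := by
  induction j, hij using Int.leInduction with
  | base =>
    simp only [diagDiff, add_sub_cancel_right,
      extend_of_not_mem (lt_irrefl _ ∘ And.left ∘ And.right)]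
    ring
  | succ j hij ih =>
    have hsum := mem_ker_Bmat_iff.1 hx i j hi (by omega) (by omega)
    rw [incidenceSum_eq_diagDiff] at hsum
    linarith [ih (by omega)]

lemma diagDiff_extend_eq {i j : ℤ} (hi : 1 ≤ i) (hij : i ≤ j) (hj : j ≤ N + 1) :
    diagDiff (extend x) i j = extend x 1 j - extend x 1 i := by
  induction i, hi using Int.leInduction generalizing j with
  | base =>
    rw [diagDiff, extend_of_not_mem (x := x) (i := 1 - 1) (by omega),
      extend_of_not_mem (x := x) (i := 1) (j := 1) (by omega)]
  | succ i hi ih =>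
    have hstep := diagDiff_succ_sub hx hi hij hj
    linarith [ih (by omega) hj, ih (by omega) (by omega : i + 1 ≤ N + 1)]

lemma extend_eq_potentialGrid {i j : ℤ} (hi : 0 ≤ i) (hij : i ≤ j) (hj : j ≤ N + 1) :
    extend x i j = potentialGrid (rowPotential x) i j := by
  induction i, hi using Int.leInduction generalizing j with
  | base =>
    rw [extend_of_not_mem (by omega), potentialGrid, sub_zero, rowPotential_zero]
    ring
  | succ i hi ih =>
    have hdiag := diagDiff_extend_eq hx (i := i + 1) (by omega) hij hj
    rw [diagDiff, add_sub_cancel_right, ih (by omega) (by omega)] at hdiag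
    have hj' := rowPotential_succ x (k := j - 1) (by omega)
    have hi' := rowPotential_succ x hi
    rw [sub_add_cancel] at hj'
    simp only [potentialGrid] at hdiag ⊢
    rw [show j - (i + 1) = j - 1 - i by ring]
    linarith

theorem exists_antisymm_potential_of_mem_ker :
    ∃ W : ℤ → ℚ, (∀ k : ℤ, 1 ≤ k → k ≤ N → W k + W (N + 1 - k) = 0) ∧
      x = restrict (potentialGrid W) := by
  set W₀ := rowPotential x
  set a : ℚ := W₀ (N + 1) / (N + 1)
  have hN : ((N : ℚ) + 1) ≠ 0 := by positivity
  -- the linear summand `-a * k` is invisible in the grid and makes the potential antisymmetric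
  refine ⟨fun k => W₀ k + -a * k, fun k hk hkN => ?_, ?_⟩
  · have hbdry := extend_eq_potentialGrid hx (i := k) (j := N + 1) (by omega) (by omega) le_rfl
    rw [extend_of_not_mem (by omega), potentialGrid] at hbdry
    push_cast
    rw [show W₀ k + -a * k + (W₀ (N + 1 - k) + -a * (N + 1 - k))
        = W₀ k + W₀ (N + 1 - k) - a * (N + 1) by ring, div_mul_cancel₀ _ hN]
    linarith
  · funext v
    obtain ⟨hi, hij, hj⟩ := coe_bounds v
    rw [potentialGrid_add_linear, restrict, ← extend_coe x v,
      extend_eq_potentialGrid hx (by omega) hij.le (by omega)]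

end Kernel

section Parametrization

variable (N)

def finLift (c : Fin (N / 2) → ℚ) (t : ℤ) : ℚ :=
  if h : 1 ≤ t ∧ t ≤ (N / 2 : ℕ) then c ⟨(t - 1).toNat, by omega⟩ else 0

def antisymmPotential (c : Fin (N / 2) → ℚ) (k : ℤ) : ℚ :=
  finLift N c k - finLift N c (N + 1 - k)

variable {N}

lemma finLift_of_not_mem {c : Fin (N / 2) → ℚ} {t : ℤ} (h : ¬(1 ≤ t ∧ t ≤ (N / 2 : ℕ))) :
    finLift N c t = 0 := dif_neg h

lemma finLift_coe_add_one (c : Fin (N / 2) → ℚ) (t : Fin (N / 2)) :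
    finLift N c (t + 1) = c t := by
  rw [finLift, dif_pos (by omega)]
  simp

lemma antisymmPotential_add_reflect (c : Fin (N / 2) → ℚ) (k : ℤ) :
    antisymmPotential N c k + antisymmPotential N c (N + 1 - k) = 0 := by
  simp only [antisymmPotential, sub_sub_cancel]
  ring

lemma antisymmPotential_zero (c : Fin (N / 2) → ℚ) : antisymmPotential N c 0 = 0 := by
  rw [antisymmPotential, finLift_of_not_mem (by omega), finLift_of_not_mem (by omega), sub_zero]

lemma antisymmPotential_coe_add_one (c : Fin (N / 2) → ℚ) (t : Fin (N / 2)) :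
    antisymmPotential N c (t + 1) = c t := by
  rw [antisymmPotential, finLift_coe_add_one, finLift_of_not_mem (by omega), sub_zero]

lemma antisymmPotential_eq {W : ℤ → ℚ}
    (hW : ∀ k : ℤ, 1 ≤ k → k ≤ N → W k + W (N + 1 - k) = 0) {k : ℤ} (hk : 1 ≤ k) (hkN : k ≤ N) :
    antisymmPotential N (fun t => W (t + 1)) k = W k := by
  have hpair := hW k hk hkN
  rw [antisymmPotential]
  by_cases hlow : k ≤ (N / 2 : ℕ)
  · rw [finLift, dif_pos ⟨hk, hlow⟩, finLift_of_not_mem (by omega)]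
    simp only [sub_zero]
    congr 1
    omega
  by_cases hhigh : N + 1 - k ≤ (N / 2 : ℕ)
  · rw [finLift_of_not_mem (by omega), finLift, dif_pos ⟨by omega, hhigh⟩]
    rw [show ((((N : ℤ) + 1 - k - 1).toNat : ℕ) : ℤ) + 1 = N + 1 - k by omega]
    linarith
  · rw [show (N : ℤ) + 1 - k = k by omega] at hpair ⊢
    rw [sub_self]
    linarith

lemma eq_zero_of_potentialGrid_one_eq_zero {W : ℤ → ℚ}
    (hW : ∀ k : ℤ, 1 ≤ k → k ≤ N → W k + W (N + 1 - k) = 0)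
    (hrow : ∀ j : ℤ, 2 ≤ j → j ≤ N → potentialGrid W 1 j = 0)
    {k : ℤ} (hk : 1 ≤ k) (hkN : k ≤ N) : W k = 0 := by
  have hlin : ∀ k : ℤ, 1 ≤ k → k ≤ N → W k = k * W 1 := by
    intro k hk hkN
    induction k, hk using Int.leInduction with
    | base => simp
    | succ k hk ih =>
      have hstep := hrow (k + 1) (by omega) hkN
      rw [potentialGrid, add_sub_cancel_right] at hstep
      rw [Int.cast_add, Int.cast_one, add_mul, ← ih (by omega)]
      linarith
  have h1 : W 1 = 0 := by
    have hsum := hW 1 le_rfl (by omega)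
    rw [add_sub_cancel_right, hlin N (by omega) le_rfl, Int.cast_natCast] at hsum
    have hN : ((N : ℚ) + 1) ≠ 0 := by positivity
    exact (mul_eq_zero.1 (by linarith : ((N : ℚ) + 1) * W 1 = 0)).resolve_left hN
  rw [hlin k hk hkN, h1, mul_zero]

variable (N)

def kerParam : (Fin (N / 2) → ℚ) →ₗ[ℚ] (VIdx N → ℚ) where
  toFun c := restrict (potentialGrid (antisymmPotential N c))
  map_add' c d := by
    funext v
    simp only [restrict, potentialGrid, antisymmPotential, finLift, Pi.add_apply]
    split_ifs <;> ring
  map_smul' r c := by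
    funext v
    simp only [restrict, potentialGrid, antisymmPotential, finLift, Pi.smul_apply, smul_eq_mul,
      RingHom.id_apply]
    split_ifs <;> ring

lemma range_kerParam :
    LinearMap.range (kerParam N) = LinearMap.ker (Bmat N).mulVecLin := by
  apply le_antisymm
  · rintro _ ⟨c, rfl⟩
    refine restrict_potentialGrid_mem_ker (antisymmPotential_zero c) fun k _ _ => ?_
    have h0 := antisymmPotential_add_reflect c 0
    rw [antisymmPotential_zero, zero_add, sub_zero] at h0
    rw [antisymmPotential_add_reflect, h0]
  · intro x hx
    obtain ⟨W, hW, rfl⟩ := exists_antisymm_potential_of_mem_ker hx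
    refine ⟨fun t => W (t + 1), funext fun v => ?_⟩
    obtain ⟨hi, hij, hj⟩ := coe_bounds v
    simp only [kerParam, LinearMap.coe_mk, AddHom.coe_mk, restrict, potentialGrid]
    rw [antisymmPotential_eq hW hi (by omega), antisymmPotential_eq hW (by omega) hj,
      antisymmPotential_eq hW (by omega) (by omega)]

lemma kerParam_injective : Function.Injective (kerParam N) := by
  refine (injective_iff_map_eq_zero _).2 fun c hc => funext fun t => ?_
  have hrow : ∀ j : ℤ, 2 ≤ j → j ≤ N → potentialGrid (antisymmPotential N c) 1 j = 0 := by
    intro j hj hjN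
    have hv := congrFun hc (vertex N 1 j ⟨le_rfl, by omega, hjN⟩)
    rwa [kerParam, LinearMap.coe_mk, AddHom.coe_mk, restrict, (coe_vertex _).1,
      (coe_vertex _).2] at hv
  rw [← antisymmPotential_coe_add_one c t, Pi.zero_apply]
  exact eq_zero_of_potentialGrid_one_eq_zero (fun k _ _ => antisymmPotential_add_reflect c k)
    hrow (by omega) (by omega)

end Parametrization

end TriangularQuiver

theorem finrank_ker_B_general (N : ℕ) :
    Module.finrank ℚ (LinearMap.ker (Bmat N).mulVecLin) =
      if N % 2 = 0 then N / 2 else (N - 1) / 2 := by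
  rw [← TriangularQuiver.range_kerParam, LinearMap.finrank_range_of_inj
    (TriangularQuiver.kerParam_injective N), Module.finrank_fin_fun]
  split_ifs <;> omega

/-- The kernel of the incidence matrix `B` of `Q_N` (equivalently, the center of the
quantum torus `T_N`) has dimension `N/2` for even `N` and `(N-1)/2` for odd `N`. -/
theorem finrank_ker_B (N : ℕ) (hN : 2 ≤ N) :
    Module.finrank ℚ (LinearMap.ker (Bmat N).mulVecLin) =
      if N % 2 = 0 then N / 2 else (N - 1) / 2 :=
  finrank_ker_B_general N
end

section
/- Let V be the space of formal Laurent series in variables x_{12}, x_{13}, x_{23}, x_{14}, x_{24}, x_{34}, and let F ∈ End(V^{⊗...}) act on the three variables (x_{ab}, x_{ac}, x_{bc}) by (F_{abc} f)(..., x_{ab}, x_{ac}, x_{bc}, ...) = f(..., x_{ab}x_{ac}/x_{bc}, x_{bc}, x_{ac}, ...). Then F satisfies the tetrahedron equation F_{123} F_{124} F_{134} F_{234} = F_{234} F_{134} F_{124} F_{123}, and moreover F_{abc}² = id. -/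
/-!
`F_{abc}` acts on coefficient functions by precomposition with a map `Fexp a b c` of exponent
vectors which fixes every coordinate except `ac` and `bc`. Precomposition reverses the order of
composition, and the tetrahedron equation read backwards is the tetrahedron equation again, so
both claims reduce to the same identities for the maps `Fexp`, which are checked coordinatewise.
-/

/-- Formal Laurent series in the variables `x_{ij}` are encoded by their coefficient
functions: a function assigning to each exponent vector `e : ℕ × ℕ → ℤ` (only the
components at index pairs matter) the coefficient of the monomial `∏ x_{ij}^{e ij}`. -/
abbrev LSeries' : Type := ((ℕ × ℕ) → ℤ) → ℚ

/-- The operator `F_{abc}` acting on Laurent series in the variables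
`x_{ab}, x_{ac}, x_{bc}` by `(F_{abc} f)(…, x_{ab}, x_{ac}, x_{bc}, …) =
f(…, x_{ab}x_{ac}/x_{bc}, x_{bc}, x_{ac}, …)`; on monomials,
`F : x_{ab}^k x_{ac}^l x_{bc}^m ↦ x_{ab}^k x_{ac}^{m+k} x_{bc}^{l-k}`. -/
def Fop (a b c : ℕ) (f : LSeries') : LSeries' := fun e =>
  f (Function.update (Function.update e (a, c) (e (b, c) + e (a, b)))
      (b, c) (e (a, c) - e (a, b)))

def Fexp (a b c : ℕ) (e : ℕ × ℕ → ℤ) : ℕ × ℕ → ℤ :=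
  Function.update (Function.update e (a, c) (e (b, c) + e (a, b))) (b, c) (e (a, c) - e (a, b))

theorem Fop_eq_comp_Fexp (a b c : ℕ) (f : LSeries') : Fop a b c f = f ∘ Fexp a b c := rfl

namespace Fexp

variable {a b c : ℕ} (e : ℕ × ℕ → ℤ)

theorem apply_of_ne {p : ℕ × ℕ} (hac : p ≠ (a, c)) (hbc : p ≠ (b, c)) :
    Fexp a b c e p = e p := by
  simp only [Fexp, Function.update_of_ne hbc, Function.update_of_ne hac]

theorem apply_ab (hab : a ≠ b) (hbc : b ≠ c) : Fexp a b c e (a, b) = e (a, b) :=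
  apply_of_ne e (by simp [hbc]) (by simp [hab])

theorem apply_ac (hab : a ≠ b) : Fexp a b c e (a, c) = e (b, c) + e (a, b) := by
  simp [Fexp, hab]

theorem apply_bc : Fexp a b c e (b, c) = e (a, c) - e (a, b) := by
  simp [Fexp]

theorem involutive (hab : a ≠ b) (hbc : b ≠ c) : Function.Involutive (Fexp a b c) := by
  intro e
  funext p
  by_cases hac : p = (a, c)
  · subst hac
    rw [apply_ac _ hab, apply_bc, apply_ab _ hab hbc]
    ring
  by_cases hbc' : p = (b, c)
  · subst hbc'
    rw [apply_bc, apply_ac _ hab, apply_ab _ hab hbc]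
    ring
  rw [apply_of_ne _ hac hbc', apply_of_ne _ hac hbc']

end Fexp

theorem Fexp_tetrahedron {a b c d : ℕ} (hab : a < b) (hbc : b < c) (hcd : c < d) :
    Fexp b c d ∘ Fexp a c d ∘ Fexp a b d ∘ Fexp a b c =
      Fexp a b c ∘ Fexp a b d ∘ Fexp a c d ∘ Fexp b c d := by
  obtain ⟨_, _, _, _, _, _⟩ : a ≠ b ∧ a ≠ c ∧ a ≠ d ∧ b ≠ c ∧ b ≠ d ∧ c ≠ d := by omega
  funext e ⟨i, j⟩
  simp only [Function.comp_apply, Fexp, Function.update_apply, Prod.mk.injEq, *, and_false,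
    false_and, and_true, true_and, if_false, if_true]
  split_ifs <;> omega

/-- `F` satisfies the tetrahedron equation
`F₁₂₃ F₁₂₄ F₁₃₄ F₂₃₄ = F₂₃₄ F₁₃₄ F₁₂₄ F₁₂₃`, and moreover `F_{abc}² = id`. -/
theorem Fop_tetrahedron_and_involutive :
    (Fop 1 2 3 ∘ Fop 1 2 4 ∘ Fop 1 3 4 ∘ Fop 2 3 4 =
      Fop 2 3 4 ∘ Fop 1 3 4 ∘ Fop 1 2 4 ∘ Fop 1 2 3) ∧
    (∀ a b c : ℕ, a < b → b < c → Fop a b c ∘ Fop a b c = id) := by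
  constructor
  · funext f
    simp only [Function.comp_apply, Fop_eq_comp_Fexp, Function.comp_assoc,
      Fexp_tetrahedron (a := 1) (b := 2) (c := 3) (d := 4) (by norm_num) (by norm_num) (by norm_num)]
  · intro a b c hab hbc
    funext f
    simp only [Function.comp_apply, Fop_eq_comp_Fexp, Function.comp_assoc,
      (Fexp.involutive hab.ne hbc.ne).comp_self, Function.comp_id, id_eq]
end
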